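/- arXiv:2205.09553 — 5 statements merged into one kernel-verified Lean document; each statement's English description precedes it below -/
import Mathlib

section
/- If a bounded graded poset P is totally semimodular (every interval of P is semimodular), then for every interval [x,y] of P, every ordering of the atoms of [x,y] is a recursive atom ordering. -/
/-- Auxiliary fuelled version of the recursive atom ordering condition for the interval
`[x, y]` of a poset `P`.  The list of atoms is given as an injective enumeration
`a : Fin t → P` of the atoms of `[x, y]` (elements covering `x` and below `y`). -/
def RAOFuel {P : Type*} [PartialOrder P] : ℕ → P → P → (t : ℕ) → (Fin t → P) → Prop
  | 0, _, _, _, _ => False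
  | (fuel + 1), x, y, t, a =>
      -- `a` enumerates the atoms of `[x,y]` without repetition
      (∀ p : P, (∃ i, a i = p) ↔ (x ⋖ p ∧ p ≤ y)) ∧
      Function.Injective a ∧
      -- if the interval has length greater than 1:
      (¬ x ⋖ y →
        -- (i) each `[a j, y]` admits a recursive atom ordering in which the atoms covering
        -- some earlier `a i` come first
        (∀ j : Fin t, ∃ s : ℕ, ∃ b : Fin s → P,
           RAOFuel fuel (a j) y s b ∧
           ∃ m : ℕ, ∀ q : Fin s, ((∃ i : Fin t, i < j ∧ a i ⋖ b q) ↔ (q : ℕ) < m)) ∧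
        -- (ii) for `i < j`, if `a i, a j < u` then some `z ≤ u` covers `a j` and an earlier atom
        (∀ i j : Fin t, i < j → ∀ u : P, u ≤ y → a i < u → a j < u →
           ∃ k : Fin t, k < j ∧ ∃ z : P, z ≤ u ∧ a k ⋖ z ∧ a j ⋖ z))

/-- `a : Fin t → P` is a recursive atom ordering of the interval `[x, y]`. -/
def IsRAO {P : Type*} [PartialOrder P] (x y : P) (t : ℕ) (a : Fin t → P) : Prop :=
  ∃ fuel, RAOFuel fuel x y t a

/-! Condition (ii) needs only semimodularity of `[x, u]`: the distinct atoms `a i, a j < u` are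
both covered by some `z ≤ u`, so `k = i` works. Condition (i) asks for *some* recursive atom
ordering of `[a j, y]` with a prescribed initial segment; listing first the atoms that cover an
earlier `a i` and recursing into `[a j, y]` provides one, since every ordering there is again
recursive. The recursion terminates because `P` is finite and the number of elements strictly
above the bottom of the interval drops at each step. -/

lemma List.prop_getElem_append_iff {α : Type*} {Q : α → Prop} {l₁ l₂ : List α}
    (h₁ : ∀ p ∈ l₁, Q p) (h₂ : ∀ p ∈ l₂, ¬ Q p) {q : ℕ} (hq : q < (l₁ ++ l₂).length) :
    Q (l₁ ++ l₂)[q] ↔ q < l₁.length := by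
  rcases lt_or_ge q l₁.length with h | h
  · simp only [List.getElem_append_left h, h₁ _ (List.getElem_mem _), h]
  · simp only [List.getElem_append_right h, h₂ _ (List.getElem_mem _), false_iff, not_lt, h]

lemma Set.Finite.exists_enum_prop_first {α : Type*} {S : Set α} (hS : S.Finite)
    (Q : α → Prop) :
    ∃ (s : ℕ) (b : Fin s → α), Function.Injective b ∧ (∀ p, (∃ i, b i = p) ↔ p ∈ S) ∧
      ∃ m : ℕ, ∀ q, Q (b q) ↔ (q : ℕ) < m := by
  classical
  set l₁ := (hS.toFinset.filter Q).toList
  set l₂ := (hS.toFinset.filter (¬ Q ·)).toList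
  have hl₁ : ∀ p, p ∈ l₁ ↔ p ∈ S ∧ Q p := by simp [l₁]
  have hl₂ : ∀ p, p ∈ l₂ ↔ p ∈ S ∧ ¬ Q p := by simp [l₂]
  have hnodup : (l₁ ++ l₂).Nodup :=
    (Finset.nodup_toList _).append (Finset.nodup_toList _)
      fun p hp₁ hp₂ => ((hl₂ p).1 hp₂).2 ((hl₁ p).1 hp₁).2
  refine ⟨_, (l₁ ++ l₂).get, List.nodup_iff_injective_get.1 hnodup, fun p => ?_,
    l₁.length, fun q => List.prop_getElem_append_iff (fun p hp => ((hl₁ p).1 hp).2)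
      (fun p hp => ((hl₂ p).1 hp).2) q.isLt⟩
  rw [← List.mem_iff_get, List.mem_append, hl₁, hl₂]
  tauto

section RecursiveAtomOrdering

variable {P : Type*} [PartialOrder P]

lemma ncard_Ioi_lt_ncard_Ioi [Finite P] {x y : P} (h : x < y) :
    (Set.Ioi y).ncard < (Set.Ioi x).ncard :=
  Set.ncard_lt_ncard <| (Set.ssubset_iff_of_subset (Set.Ioi_subset_Ioi h.le)).2
    ⟨y, h, lt_irrefl y⟩

lemma raoFuel_succ_of_forall_raoFuel
    (hsemi : ∀ b x u v : P, x ≤ b → u ≤ b → v ≤ b → u ≠ v → x ⋖ u → x ⋖ v →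
       ∃ z : P, z ≤ b ∧ u ⋖ z ∧ v ⋖ z)
    [Finite P] {n : ℕ} {x y : P} {t : ℕ} {a : Fin t → P} (hinj : Function.Injective a)
    (henum : ∀ p : P, (∃ i, a i = p) ↔ (x ⋖ p ∧ p ≤ y))
    (hrec : ∀ j (s : ℕ) (b : Fin s → P), Function.Injective b →
      (∀ p : P, (∃ i, b i = p) ↔ (a j ⋖ p ∧ p ≤ y)) → RAOFuel n (a j) y s b) :
    RAOFuel (n + 1) x y t a := by
  have hatom : ∀ i, x ⋖ a i := fun i => ((henum (a i)).1 ⟨i, rfl⟩).1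
  refine ⟨henum, hinj, fun _ => ⟨fun j => ?_, fun i j hij u _ hiu hju => ?_⟩⟩
  · obtain ⟨s, b, hbinj, hbenum, hfirst⟩ :=
      (Set.toFinite {p | a j ⋖ p ∧ p ≤ y}).exists_enum_prop_first
        (fun p => ∃ i, i < j ∧ a i ⋖ p)
    exact ⟨s, b, hrec j s b hbinj hbenum, hfirst⟩
  · obtain ⟨z, hzu, hiz, hjz⟩ := hsemi u x (a i) (a j) ((hatom i).le.trans hiu.le) hiu.le
      hju.le (hinj.ne hij.ne) (hatom i) (hatom j)
    exact ⟨i, hij, z, hzu, hiz, hjz⟩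

theorem raoFuel_of_ncard_Ioi_le
    (hsemi : ∀ b x u v : P, x ≤ b → u ≤ b → v ≤ b → u ≠ v → x ⋖ u → x ⋖ v →
       ∃ z : P, z ≤ b ∧ u ⋖ z ∧ v ⋖ z)
    [Finite P] (n : ℕ) {x : P} (hx : (Set.Ioi x).ncard ≤ n) (y : P) (t : ℕ) (a : Fin t → P)
    (hinj : Function.Injective a) (henum : ∀ p : P, (∃ i, a i = p) ↔ (x ⋖ p ∧ p ≤ y)) :
    RAOFuel (n + 1) x y t a := by
  induction n generalizing x t a with
  | zero =>
    refine raoFuel_succ_of_forall_raoFuel hsemi hinj henum fun j _ _ _ _ => ?_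
    have := ncard_Ioi_lt_ncard_Ioi ((henum (a j)).1 ⟨j, rfl⟩).1.lt
    omega
  | succ n ih =>
    refine raoFuel_succ_of_forall_raoFuel hsemi hinj henum fun j s b hbinj hbenum =>
      ih ?_ s b hbinj hbenum
    have := ncard_Ioi_lt_ncard_Ioi ((henum (a j)).1 ⟨j, rfl⟩).1.lt
    omega

end RecursiveAtomOrdering

theorem totallySemimodular_every_atom_ordering_RAO_general
    {P : Type*} [PartialOrder P] [Fintype P]
    (hsemi : ∀ b x u v : P, x ≤ b → u ≤ b → v ≤ b → u ≠ v → x ⋖ u → x ⋖ v →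
       ∃ z : P, z ≤ b ∧ u ⋖ z ∧ v ⋖ z) :
    ∀ x y : P, x ≤ y → ∀ (t : ℕ) (a : Fin t → P),
      Function.Injective a → (∀ p : P, (∃ i, a i = p) ↔ (x ⋖ p ∧ p ≤ y)) →
      IsRAO x y t a :=
  fun _ y _ t a hinj henum => ⟨_, raoFuel_of_ncard_Ioi_le hsemi _ le_rfl y t a hinj henum⟩

/-- If a finite bounded graded poset `P` is totally semimodular (every interval is semimodular),
then for every interval `[x, y]` of `P`, every ordering of the atoms of `[x, y]` is a
recursive atom ordering. -/
theorem totallySemimodular_every_atom_ordering_RAO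
    {P : Type*} [PartialOrder P] [BoundedOrder P] [Fintype P]
    (rk : P → ℕ) (hrk : ∀ a b : P, a ⋖ b → rk b = rk a + 1)
    (hsemi : ∀ b x u v : P, x ≤ b → u ≤ b → v ≤ b → u ≠ v → x ⋖ u → x ⋖ v →
       ∃ z : P, z ≤ b ∧ u ⋖ z ∧ v ⋖ z) :
    ∀ x y : P, x ≤ y → ∀ (t : ℕ) (a : Fin t → P),
      Function.Injective a → (∀ p : P, (∃ i, a i = p) ↔ (x ⋖ p ∧ p ≤ y)) →
      IsRAO x y t a :=
  totallySemimodular_every_atom_ordering_RAO_general hsemi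
end

section
/- Let M and N be rank-2 oriented matroids on [n] with chirotopes χ_M and χ_N. Suppose there is an element i with at least one other element parallel or anti-parallel to i in M, such that i is a loop of N and χ_N(j,k) = χ_M(j,k) for all j, k ≠ i. Then M covers N in the weak map order on rank-2 oriented matroids. -/
/-- A rank-2 chirotope on `n` elements: a nonzero alternating sign function on pairs
satisfying the rank-2 Grassmann–Plücker relations.  A rank-2 oriented matroid is such a
chirotope up to global sign. -/
structure Chirotope2 (n : ℕ) : Type where
  χ : Fin n → Fin n → SignType
  nonzero : ∃ i j, χ i j ≠ 0
  alt : ∀ i j, χ i j = - χ j i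
  gp : ∀ x y0 y1 y2 : Fin n,
    (χ y0 x * χ y1 y2 = 0 ∧ χ y1 x * χ y0 y2 = 0 ∧ χ y2 x * χ y0 y1 = 0) ∨
    ((χ y0 x * χ y1 y2 = 1 ∨ -(χ y1 x * χ y0 y2) = 1 ∨ χ y2 x * χ y0 y1 = 1) ∧
     (χ y0 x * χ y1 y2 = -1 ∨ -(χ y1 x * χ y0 y2) = -1 ∨ χ y2 x * χ y0 y1 = -1))

/-- The weak map order on rank-2 oriented matroids: `N ≤ M` iff, for a suitable global sign,
every basis of `N` is a basis of `M` with matching orientation. -/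
def omLe {n : ℕ} (N M : Chirotope2 n) : Prop :=
  ∃ ε : SignType, (ε = 1 ∨ ε = -1) ∧ ∀ i j, N.χ i j = 0 ∨ N.χ i j = ε * M.χ i j

/-- Strict weak map order. -/
def omLt {n : ℕ} (N M : Chirotope2 n) : Prop := omLe N M ∧ ¬ omLe M N

/-- Two chirotopes determine the same oriented matroid. -/
def omEquiv {n : ℕ} (N M : Chirotope2 n) : Prop := omLe N M ∧ omLe M N

/-- `M` covers `N` in the weak map order: `N < M` and nothing lies strictly between. -/
def OMCovers {n : ℕ} (N M : Chirotope2 n) : Prop :=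
  omLt N M ∧ ∀ N' : Chirotope2 n, omLt N N' → ¬ omLt N' M

/-- `i` is a loop of `M`. -/
def IsLoop {n : ℕ} (M : Chirotope2 n) (i : Fin n) : Prop := ∀ k, M.χ i k = 0

/-- The parallel/anti-parallel class of `i` in `M`. -/
def ParClass {n : ℕ} (M : Chirotope2 n) (i : Fin n) : Set (Fin n) :=
  {j | (∀ k, M.χ j k = M.χ i k) ∨ (∀ k, M.χ j k = - M.χ i k)}

lemma chi_self_zero {n : ℕ} (M : Chirotope2 n) (a : Fin n) : M.χ a a = 0 := by
  have h := M.alt a a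
  cases hx : M.χ a a <;> rw [hx] at h <;> first | rfl | exact absurd h (by decide)

/-- (CR1) If `i` is a non-loop of `M` with at least one other element parallel or
anti-parallel to it, `i` is a loop of `N`, and the chirotopes of `N` and `M` agree away
from `i`, then `M` covers `N` in the weak map order on rank-2 oriented matroids. -/
theorem covers_of_CR1 {n : ℕ} (M N : Chirotope2 n) (i : Fin n)
    (hi : ¬ IsLoop M i) (hpar : ∃ j, j ≠ i ∧ j ∈ ParClass M i)
    (hloop : IsLoop N i)
    (hsame : ∀ j k : Fin n, j ≠ i → k ≠ i → N.χ j k = M.χ j k) :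
    OMCovers N M := by
  obtain ⟨j₀, hj₀i, hj₀⟩ := hpar
  have hMij₀ : M.χ i j₀ = 0 := by
    have h1 : M.χ j₀ i = 0 := by
      rcases hj₀ with h | h
      · rw [h i]; exact chi_self_zero M i
      · rw [h i, chi_self_zero, neg_zero]
    rw [M.alt, h1, neg_zero]
  constructor
  · constructor
    · refine ⟨1, Or.inl rfl, fun a b => ?_⟩
      by_cases ha : a = i
      · subst ha; exact Or.inl (hloop b)
      by_cases hb : b = i
      · subst hb; left; rw [N.alt, hloop, neg_zero]
      · exact Or.inr (by rw [hsame a b ha hb, one_mul])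
    · rintro ⟨η, hη, h⟩
      apply hi
      intro k
      rcases h i k with h0 | h0
      · exact h0
      · rw [hloop k, mul_zero] at h0; exact h0
  · rintro N' ⟨hNN', hN'N⟩ ⟨⟨ε, hε, hN'M⟩, hMN'⟩
    obtain ⟨δ, hδ, hNled⟩ := hNN'
    -- N' must be nonzero somewhere on row i
    have hex : ∃ k, N'.χ i k ≠ 0 := by
      by_contra hall
      push_neg at hall
      apply hN'N
      refine ⟨ε, hε, fun a b => ?_⟩
      by_cases ha : a = i
      · subst ha; exact Or.inl (hall b)
      by_cases hb : b = i
      · subst hb; left; rw [N'.alt, hall a, neg_zero]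
      rcases hN'M a b with h0 | h0
      · exact Or.inl h0
      · exact Or.inr (by rw [h0, hsame a b ha hb])
    obtain ⟨k₀, hk₀⟩ := hex
    have hN'ik₀ : N'.χ i k₀ = ε * M.χ i k₀ := (hN'M i k₀).resolve_left hk₀
    have hMik₀ : M.χ i k₀ ≠ 0 := by
      intro h0; rw [h0, mul_zero] at hN'ik₀; exact hk₀ hN'ik₀
    -- away from i, N' agrees with ε·M wherever M is nonzero
    have hne' : ∀ a b, a ≠ i → b ≠ i → M.χ a b ≠ 0 → N'.χ a b = ε * M.χ a b := by
      intro a b ha hb hM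
      have h0 : N'.χ a b ≠ 0 := by
        intro h0
        rcases hNled a b with h1 | h1
        · rw [hsame a b ha hb] at h1; exact hM h1
        · rw [h0, mul_zero, hsame a b ha hb] at h1; exact hM h1
      exact (hN'M a b).resolve_left h0
    have hN'ij₀ : N'.χ i j₀ = 0 := by
      rcases hN'M i j₀ with h0 | h0
      · exact h0
      · rw [h0, hMij₀, mul_zero]
    -- key claim: row i of N' equals ε times row i of M
    have key : ∀ k, N'.χ i k = ε * M.χ i k := by
      intro k
      by_cases hMik : M.χ i k = 0
      · rcases hN'M i k with h0 | h0
        · rw [h0, hMik, mul_zero]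
        · exact h0
      have hki : k ≠ i := fun h => hMik (by rw [h]; exact chi_self_zero M i)
      have hkj₀ : k ≠ j₀ := fun h => hMik (by rw [h]; exact hMij₀)
      have hk₀i : k₀ ≠ i := fun h => hMik₀ (by rw [h]; exact chi_self_zero M i)
      have hMj₀k : M.χ j₀ k ≠ 0 := by
        rcases hj₀ with h | h
        · rw [h k]; exact hMik
        · rw [h k]
          intro h0
          apply hMik
          cases hx : M.χ i k <;> rw [hx] at h0 <;> first | rfl | exact absurd h0 (by decide)
      have hN'j₀k : N'.χ j₀ k ≠ 0 := by
        rw [hne' j₀ k hj₀i hki hMj₀k]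
        rcases hε with rfl | rfl
        · rw [one_mul]; exact hMj₀k
        · exact fun h => hMj₀k (by cases hx : M.χ j₀ k <;> rw [hx] at h <;> simp_all)
      have hP3 : N'.χ j₀ k * N'.χ i k₀ ≠ 0 := mul_ne_zero hN'j₀k hk₀
      have hgp := N'.gp k i k₀ j₀
      have hP1 : N'.χ i k * N'.χ k₀ j₀ ≠ 0 := by
        rcases hgp with ⟨_, _, h3⟩ | ⟨h1, h2⟩
        · exact absurd h3 hP3
        · rw [hN'ij₀, mul_zero, neg_zero] at h1 h2
          rcases h1 with h1 | h1 | h1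
          · rw [h1]; decide
          · exact absurd h1 (by decide)
          · rcases h2 with h2 | h2 | h2
            · rw [h2]; decide
            · exact absurd h2 (by decide)
            · rw [h1] at h2; exact absurd h2 (by decide)
      have hik : N'.χ i k ≠ 0 := fun h0 => hP1 (by rw [h0, zero_mul])
      exact (hN'M i k).resolve_left hik
    -- conclude M ≤ N', contradiction
    apply hMN'
    refine ⟨ε, hε, fun a b => Or.inr ?_⟩
    have hfull : N'.χ a b = ε * M.χ a b := by
      by_cases ha : a = i
      · subst ha; exact key b
      by_cases hb : b = i
      · rw [hb, N'.alt, key a, M.alt i a, mul_neg, neg_neg]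
      by_cases hM : M.χ a b = 0
      · rcases hN'M a b with h0 | h0
        · rw [h0, hM, mul_zero]
        · exact h0
      · exact hne' a b ha hb hM
    rw [hfull, ← mul_assoc]
    rcases hε with rfl | rfl <;> simp
end

section
/- Let M and N be rank-2 oriented matroids on [n] with chirotopes χ_M, χ_N. Suppose there are two distinct parallel/anti-parallel classes P_M(i), P_M(j) of M such that χ_N(a,b) = 0 for a, b ∈ P_M(i) ∪ P_M(j), and χ_N(a,b) = χ_M(a,b) otherwise. Then M covers N in the weak map order on rank-2 oriented matroids. -/
lemma chi_self {n : ℕ} (M : Chirotope2 n) (i : Fin n) : M.χ i i = 0 := by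
  have := M.alt i i
  rcases h : M.χ i i <;> rw [h] at this <;> simp_all

/-- key GP consequence -/
lemma gp_prod {n : ℕ} (M : Chirotope2 n) (i j : Fin n) (hij : M.χ i j = 0)
    (m k : Fin n) : M.χ i m * M.χ j k = M.χ j m * M.χ i k := by
  have h := M.gp m i j k
  rw [hij, mul_zero] at h
  generalize M.χ i m = a at h ⊢
  generalize M.χ j k = b at h ⊢
  generalize M.χ j m = c at h ⊢
  generalize M.χ i k = d at h ⊢
  revert h; rcases a <;> rcases b <;> rcases c <;> rcases d <;> decide

lemma mem_parclass_of_chi_zero {n : ℕ} (M : Chirotope2 n) (i j : Fin n)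
    (hi : ¬ IsLoop M i) (hj : ¬ IsLoop M j) (hij : M.χ i j = 0) :
    j ∈ ParClass M i := by
  simp only [IsLoop, not_forall] at hi hj
  obtain ⟨k0, hk0⟩ := hi
  obtain ⟨m0, hm0⟩ := hj
  have hjk0 : M.χ j k0 ≠ 0 := by
    intro h
    have := gp_prod M i j hij m0 k0
    rw [h, mul_zero] at this
    exact (mul_ne_zero hm0 hk0) this.symm
  have key : ∀ k, M.χ j k = (M.χ i k0 * M.χ j k0) * M.χ i k := by
    intro k
    have h := gp_prod M i j hij k0 k
    have h2 : M.χ i k0 * (M.χ i k0 * M.χ j k) = M.χ i k0 * (M.χ j k0 * M.χ i k) := by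
      rw [h]
    have hsq : M.χ i k0 * M.χ i k0 = 1 := by
      rcases hc : M.χ i k0 <;> simp_all
    rw [← mul_assoc, ← mul_assoc, hsq, one_mul] at h2
    exact h2
  rcases hs : M.χ i k0 * M.χ j k0 with _ | _ | _
  · exact absurd hs (mul_ne_zero hk0 hjk0)
  · right; intro k; have := key k; rw [hs] at this; simpa using this
  · left; intro k; have := key k; rw [hs] at this; simpa using this

lemma sign_neg_neg (a : SignType) : - -a = a := by rcases a <;> decide

lemma sign_neg_eq_zero (a : SignType) : -a = 0 ↔ a = 0 := by rcases a <;> decide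

lemma mem_parclass_self {n : ℕ} (M : Chirotope2 n) (i : Fin n) : i ∈ ParClass M i :=
  Or.inl fun _ => rfl

lemma parclass_eq_of_mem {n : ℕ} (M : Chirotope2 n) {i j : Fin n}
    (h : j ∈ ParClass M i) : ParClass M j = ParClass M i := by
  ext c
  simp only [ParClass, Set.mem_setOf_eq] at h ⊢
  rcases h with h | h
  · constructor <;> rintro (hc | hc)
    · exact Or.inl fun k => (hc k).trans (h k)
    · exact Or.inr fun k => (hc k).trans (by rw [h k])
    · exact Or.inl fun k => (hc k).trans (h k).symm
    · exact Or.inr fun k => (hc k).trans (by rw [h k])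
  · constructor <;> rintro (hc | hc)
    · exact Or.inr fun k => (hc k).trans (h k)
    · exact Or.inl fun k => by rw [hc k, h k, sign_neg_neg]
    · exact Or.inr fun k => by rw [hc k, h k, sign_neg_neg]
    · exact Or.inl fun k => (hc k).trans (h k).symm

lemma not_loop_of_mem {n : ℕ} (M : Chirotope2 n) {i a : Fin n}
    (hi : ¬ IsLoop M i) (ha : a ∈ ParClass M i) : ¬ IsLoop M a := by
  simp only [IsLoop, not_forall] at hi ⊢
  obtain ⟨k, hk⟩ := hi
  rcases ha with h | h
  · exact ⟨k, by rw [h k]; exact hk⟩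
  · exact ⟨k, fun h0 => hk ((sign_neg_eq_zero _).mp ((h k) ▸ h0))⟩

lemma chi_zero_of_same_class {n : ℕ} (M : Chirotope2 n) {i a b : Fin n}
    (ha : a ∈ ParClass M i) (hb : b ∈ ParClass M i) : M.χ a b = 0 := by
  have hib : M.χ i b = 0 := by
    have hbi : M.χ b i = 0 := by
      rcases hb with h | h
      · rw [h i]; exact chi_self M i
      · rw [h i, chi_self M i]; rfl
    rw [M.alt i b, M.alt b i] at *; rw [hbi]; rfl
  rcases ha with h | h
  · rw [h b]; exact hib
  · rw [h b, hib]; rfl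

/-- chi nonzero across distinct classes -/
lemma chi_ne_zero_of_ne_class {n : ℕ} (M : Chirotope2 n) {u v : Fin n}
    (hu : ¬ IsLoop M u) (hv : ¬ IsLoop M v) (huv : ParClass M u ≠ ParClass M v) :
    M.χ u v ≠ 0 := fun h =>
  huv (parclass_eq_of_mem M (mem_parclass_of_chi_zero M u v hu hv h)).symm

/-- GP propagation step -/
lemma crux {n : ℕ} (N' : Chirotope2 n) (a b c f : Fin n)
    (h0 : N'.χ c a = 0) (h1 : N'.χ a b ≠ 0) (h2 : N'.χ c f ≠ 0) :
    N'.χ c b ≠ 0 := by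
  intro hcb
  have h := N'.gp b c a f
  rw [h0, mul_zero, hcb, zero_mul] at h
  rcases h with ⟨_, h, _⟩ | ⟨hp, hm⟩
  · exact (mul_ne_zero h1 h2) h
  · generalize hq : N'.χ a b * N'.χ c f = q at hp hm
    rcases q <;> simp_all

/-- (CR2) If `P_M(i)` and `P_M(j)` are two distinct parallel/anti-parallel classes of `M`,
`χ_N` vanishes on pairs from `P_M(i) ∪ P_M(j)`, and `χ_N = χ_M` otherwise, then `M` covers
`N` in the weak map order on rank-2 oriented matroids. -/
theorem covers_of_CR2 {n : ℕ} (M N : Chirotope2 n) (i j : Fin n)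
    (hi : ¬ IsLoop M i) (hj : ¬ IsLoop M j)
    (hij : ParClass M i ≠ ParClass M j)
    (hzero : ∀ a b : Fin n, a ∈ ParClass M i ∪ ParClass M j →
      b ∈ ParClass M i ∪ ParClass M j → N.χ a b = 0)
    (hsame : ∀ a b : Fin n,
      ¬ (a ∈ ParClass M i ∪ ParClass M j ∧ b ∈ ParClass M i ∪ ParClass M j) →
      N.χ a b = M.χ a b) :
    OMCovers N M := by
  classical
  set U := ParClass M i ∪ ParClass M j with hU
  have hMij : M.χ i j ≠ 0 := chi_ne_zero_of_ne_class M hi hj hij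
  have hiU : i ∈ U := Or.inl (mem_parclass_self M i)
  have hjU : j ∈ U := Or.inr (mem_parclass_self M j)
  have hnl : ∀ t ∈ U, ¬ IsLoop M t := by
    rintro t (ht | ht)
    exacts [not_loop_of_mem M hi ht, not_loop_of_mem M hj ht]
  obtain ⟨e0, f0, hef⟩ := N.nonzero
  have hefU : ¬(e0 ∈ U ∧ f0 ∈ U) := fun ⟨h1, h2⟩ => hef (hzero _ _ h1 h2)
  have hefM : M.χ e0 f0 ≠ 0 := by rw [← hsame e0 f0 hefU]; exact hef
  obtain ⟨f, hfU, hfl⟩ : ∃ f, f ∉ U ∧ ¬ IsLoop M f := by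
    by_cases h1 : e0 ∈ U
    · refine ⟨f0, fun h => hefU ⟨h1, h⟩, fun hl => hefM ?_⟩
      rw [M.alt e0 f0, hl e0]; rfl
    · exact ⟨e0, h1, fun hl => hefM (hl f0)⟩
  have hMf : ∀ t ∈ U, M.χ f t ≠ 0 := by
    intro t ht
    refine chi_ne_zero_of_ne_class M hfl (hnl t ht) (fun h => hfU ?_)
    have hf : f ∈ ParClass M t := h ▸ mem_parclass_self M f
    rcases ht with ht | ht
    · exact Or.inl ((parclass_eq_of_mem M ht) ▸ hf)
    · exact Or.inr ((parclass_eq_of_mem M ht) ▸ hf)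
  have hle : omLe N M := by
    refine ⟨1, Or.inl rfl, fun a b => ?_⟩
    by_cases hab : a ∈ U ∧ b ∈ U
    · exact Or.inl (hzero a b hab.1 hab.2)
    · exact Or.inr (by rw [one_mul]; exact hsame a b hab)
  have hnle : ¬ omLe M N := by
    rintro ⟨ε, hε, h⟩
    rcases h i j with h0 | h0
    · exact hMij h0
    · rw [hzero i j hiU hjU, mul_zero] at h0; exact hMij h0
  refine ⟨⟨hle, hnle⟩, ?_⟩
  rintro N' ⟨hNN', hnN'N⟩ ⟨⟨ε, hε, hN'M⟩, hnMN'⟩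
  obtain ⟨δ, hδ, hle2⟩ := hNN'
  have hεsq : ∀ x : SignType, ε * (ε * x) = x := by
    rcases hε with h | h <;> subst h <;> intro x <;> rcases x <;> decide
  have hout : ∀ u v : Fin n, ¬(u ∈ U ∧ v ∈ U) → N'.χ u v = ε * M.χ u v := by
    intro u v huv
    by_cases h0 : M.χ u v = 0
    · rcases hN'M u v with h1 | h1
      · rw [h1, h0, mul_zero]
      · rw [h1, h0]
    · have hN : N.χ u v = M.χ u v := hsame u v huv
      rcases hle2 u v with h1 | h1
      · exact absurd (hN ▸ h1) h0
      · have h2 : N'.χ u v ≠ 0 := by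
          intro hz; rw [hz, mul_zero] at h1; exact h0 (hN.symm.trans h1)
        exact (hN'M u v).resolve_left h2
  by_cases hex : ∃ a b, a ∈ U ∧ b ∈ U ∧ N'.χ a b ≠ 0
  · obtain ⟨a, b, haU, hbU, hab⟩ := hex
    have hN'same : ∀ (p u v : Fin n), u ∈ ParClass M p → v ∈ ParClass M p →
        N'.χ u v = 0 := by
      intro p u v hu hv
      have h0 : M.χ u v = 0 := chi_zero_of_same_class M hu hv
      rcases hN'M u v with h1 | h1
      · exact h1
      · rw [h1, h0, mul_zero]
    obtain ⟨a, b, ha, hb, hab⟩ :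
        ∃ a b, a ∈ ParClass M i ∧ b ∈ ParClass M j ∧ N'.χ a b ≠ 0 := by
      rcases haU with ha | ha <;> rcases hbU with hb | hb
      · exact absurd (hN'same i a b ha hb) hab
      · exact ⟨a, b, ha, hb, hab⟩
      · exact ⟨b, a, hb, ha, fun h => hab (by rw [N'.alt a b, h]; rfl)⟩
      · exact absurd (hN'same j a b ha hb) hab
    have hN'f : ∀ t ∈ U, N'.χ t f ≠ 0 := by
      intro t ht
      have htf : N'.χ t f = ε * M.χ t f := hout t f (fun hh => hfU hh.2)
      have hMtf : M.χ t f ≠ 0 := fun h => hMf t ht (by rw [M.alt f t, h]; rfl)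
      rw [htf]
      exact mul_ne_zero (by rcases hε with h | h <;> subst h <;> decide) hMtf
    have key : ∀ c ∈ ParClass M i, ∀ d ∈ ParClass M j, N'.χ c d ≠ 0 := by
      intro c hc d hd
      have h1 : N'.χ c a = 0 := hN'same i c a hc ha
      have h2 : N'.χ c f ≠ 0 := hN'f c (Or.inl hc)
      have hcb : N'.χ c b ≠ 0 := crux N' a b c f h1 hab h2
      have h3 : N'.χ d b = 0 := hN'same j d b hd hb
      have h4 : N'.χ d f ≠ 0 := hN'f d (Or.inr hd)
      have hbc : N'.χ b c ≠ 0 := fun h => hcb (by rw [N'.alt c b, h]; rfl)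
      have hdc : N'.χ d c ≠ 0 := crux N' b c d f h3 hbc h4
      exact fun h => hdc (by rw [N'.alt d c, h]; rfl)
    apply hnMN'
    refine ⟨ε, hε, fun u v => ?_⟩
    by_cases h0 : M.χ u v = 0
    · exact Or.inl h0
    right
    have hN'uv : N'.χ u v = ε * M.χ u v := by
      by_cases huv : u ∈ U ∧ v ∈ U
      · refine (hN'M u v).resolve_left ?_
        obtain ⟨hu, hv⟩ := huv
        rcases hu with hu | hu <;> rcases hv with hv | hv
        · exact absurd (chi_zero_of_same_class M hu hv) h0
        · exact key u hu v hv
        · exact fun h => key v hv u hu (by rw [N'.alt v u, h]; rfl)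
        · exact absurd (chi_zero_of_same_class M hu hv) h0
      · exact hout u v huv
    rw [hN'uv, hεsq]
  · push_neg at hex
    apply hnN'N
    refine ⟨ε, hε, fun u v => Or.inr ?_⟩
    by_cases huv : u ∈ U ∧ v ∈ U
    · rw [hex u v huv.1 huv.2, hzero u v huv.1 huv.2, mul_zero]
    · rw [hout u v huv, hsame u v huv]
end

section
/- MacP(2,n), the poset of rank-2 oriented matroids on n elements ordered by weak maps, is a ranked poset with rank function h(M) = l_M + p_M - 4, where l_M is the number of non-loop elements of M and p_M is the number of distinct parallel/anti-parallel classes of M. -/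
/-- The number of non-loop elements of `M`. -/
noncomputable def lM {n : ℕ} (M : Chirotope2 n) : ℕ :=
  Nat.card {i : Fin n // ¬ IsLoop M i}

/-- The number of distinct parallel/anti-parallel classes of `M`. -/
noncomputable def pM {n : ℕ} (M : Chirotope2 n) : ℕ :=
  Nat.card {S : Set (Fin n) // ∃ i, ¬ IsLoop M i ∧ S = ParClass M i}

/-- The rank function `h(M) = l_M + p_M - 4` of `MacP(2,n)`. -/
noncomputable def hRank {n : ℕ} (M : Chirotope2 n) : ℕ := lM M + pM M - 4

namespace MacPAux

def GPc (p q r : SignType) : Prop :=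
  (p = 0 ∧ q = 0 ∧ r = 0) ∨ ((p = 1 ∨ -q = 1 ∨ r = 1) ∧ (p = -1 ∨ -q = -1 ∨ r = -1))

instance (p q r : SignType) : Decidable (GPc p q r) := by unfold GPc; infer_instance

variable {n : ℕ}

lemma gp' (M : Chirotope2 n) (x y0 y1 y2 : Fin n) :
    GPc (M.χ y0 x * M.χ y1 y2) (M.χ y1 x * M.χ y0 y2) (M.χ y2 x * M.χ y0 y1) :=
  M.gp x y0 y1 y2

/- sign algebra helpers -/
lemma sg1 : ∀ a : SignType, a = -a → a = 0 := by decide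
lemma sg_mul_ne : ∀ a b : SignType, a ≠ 0 → b ≠ 0 → a * b ≠ 0 := by decide
lemma sg_ne_of_mul : ∀ a b : SignType, a * b ≠ 0 → a ≠ 0 ∧ b ≠ 0 := by decide
lemma sg_eps_cancel : ∀ ε a b : SignType, (ε = 1 ∨ ε = -1) → a = ε * b → b = ε * a := by decide
lemma sg_dichot : ∀ u v w : SignType, u ≠ 0 → v ≠ 0 → w ≠ 0 → u * v = w ∨ u * v = -w := by decide

lemma chi_self (M : Chirotope2 n) (i : Fin n) : M.χ i i = 0 := sg1 _ (M.alt i i)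

lemma loop_col (M : Chirotope2 n) {i : Fin n} (h : IsLoop M i) (k : Fin n) : M.χ k i = 0 := by
  rw [M.alt k i, h k]; rfl

lemma nonloop_left {M : Chirotope2 n} {i j : Fin n} (h : M.χ i j ≠ 0) : ¬ IsLoop M i :=
  fun hl => h (hl j)

lemma nonloop_right {M : Chirotope2 n} {i j : Fin n} (h : M.χ i j ≠ 0) : ¬ IsLoop M j :=
  fun hl => h (loop_col M hl i)

/- the parallel relation -/
def Rel (M : Chirotope2 n) (i j : Fin n) : Prop :=
  (∀ k, M.χ j k = M.χ i k) ∨ (∀ k, M.χ j k = - M.χ i k)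

lemma mem_parClass {M : Chirotope2 n} {i j : Fin n} : j ∈ ParClass M i ↔ Rel M i j := Iff.rfl

lemma rel_refl (M : Chirotope2 n) (i : Fin n) : Rel M i i := Or.inl fun _ => rfl

lemma rel_symm {M : Chirotope2 n} {i j : Fin n} (h : Rel M i j) : Rel M j i := by
  rcases h with h | h
  · exact Or.inl fun k => (h k).symm
  · exact Or.inr fun k => by rw [h k, neg_neg]

lemma rel_trans {M : Chirotope2 n} {i j l : Fin n} (h1 : Rel M i j) (h2 : Rel M j l) :
    Rel M i l := by
  rcases h1 with h1 | h1 <;> rcases h2 with h2 | h2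
  · exact Or.inl fun k => (h2 k).trans (h1 k)
  · exact Or.inr fun k => by rw [h2 k, h1 k]
  · exact Or.inr fun k => by rw [h2 k, h1 k]
  · exact Or.inl fun k => by rw [h2 k, h1 k, neg_neg]

lemma rel_sign {M : Chirotope2 n} {i j : Fin n} (h : Rel M i j) :
    ∃ ρ : SignType, (ρ = 1 ∨ ρ = -1) ∧ ∀ k, M.χ j k = ρ * M.χ i k := by
  rcases h with h | h
  · exact ⟨1, Or.inl rfl, fun k => by rw [h k, one_mul]⟩
  · exact ⟨-1, Or.inr rfl, fun k => by rw [h k]; exact (neg_one_mul _).symm⟩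

lemma parClass_eq_iff {M : Chirotope2 n} {i j : Fin n} :
    ParClass M i = ParClass M j ↔ Rel M i j := by
  constructor
  · intro h
    have : j ∈ ParClass M i := h ▸ rel_refl M j
    exact this
  · intro h
    ext x
    exact ⟨fun hx => rel_trans (rel_symm h) hx, fun hx => rel_trans h hx⟩

lemma chi_zero_of_rel {M : Chirotope2 n} {i j : Fin n} (h : Rel M i j) : M.χ i j = 0 := by
  have h2 : M.χ j i = 0 := by
    rcases h with h | h
    · rw [h i]; exact chi_self M i
    · rw [h i, chi_self M i]; rfl
  rw [M.alt i j, h2]; rfl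

lemma sgGP1 : ∀ q : SignType, GPc 0 q 0 → q = 0 := by decide
lemma sgKey : ∀ a b A B : SignType, A ≠ 0 → B ≠ 0 → GPc (a*B) (b*A) 0 → b = B*A*a := by decide

/-- key GP consequence: non-basis pairs of non-loops are parallel -/
lemma rel_of_chi_zero {M : Chirotope2 n} {i j : Fin n}
    (hi : ¬ IsLoop M i) (hj : ¬ IsLoop M j) (hz : M.χ i j = 0) : Rel M i j := by
  simp only [IsLoop, not_forall] at hi hj
  obtain ⟨k0, hk0⟩ := hi
  have hjk0 : M.χ j k0 ≠ 0 := by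
    intro hjz
    obtain ⟨k1, hk1⟩ := hj
    have h := gp' M k1 i j k0
    rw [hjz, hz, mul_zero, mul_zero] at h
    exact sg_mul_ne _ _ hk1 hk0 (sgGP1 _ h)
  have key : ∀ k, M.χ j k = M.χ j k0 * M.χ i k0 * M.χ i k := by
    intro k
    have h := gp' M k i j k0
    rw [hz, mul_zero] at h
    exact sgKey _ _ _ _ hk0 hjk0 h
  rcases sg_dichot (M.χ j k0) (M.χ i k0) 1 hjk0 hk0 (by decide) with hσ | hσ
  · exact Or.inl fun k => by rw [key k, hσ, one_mul]
  · refine Or.inr fun k => ?_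
    rw [key k, hσ]
    exact neg_one_mul _
/- ============ order lemmas ============ -/

lemma loop_mono {N M : Chirotope2 n} (h : omLe N M) {i : Fin n} (hi : IsLoop M i) :
    IsLoop N i := by
  obtain ⟨ε, hε, hle⟩ := h
  intro k
  rcases hle i k with h0 | h0
  · exact h0
  · rw [h0, hi k, mul_zero]

lemma nonloop_mono {N M : Chirotope2 n} (h : omLe N M) {i : Fin n} (hi : ¬ IsLoop N i) :
    ¬ IsLoop M i := fun hl => hi (loop_mono h hl)

lemma chi_zero_mono {N M : Chirotope2 n} (h : omLe N M) {i j : Fin n} (hz : M.χ i j = 0) :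
    N.χ i j = 0 := by
  obtain ⟨ε, hε, hle⟩ := h
  rcases hle i j with h0 | h0
  · exact h0
  · rw [h0, hz, mul_zero]

lemma sg_sym_case : ∀ s t ε : SignType, (s = 0 ∨ s = ε * t) → (-s = 0 ∨ -s = ε * (-t)) := by
  decide

lemma omLe_sym_case {P Q : Chirotope2 n} {ε : SignType} {x y : Fin n}
    (h : P.χ y x = 0 ∨ P.χ y x = ε * Q.χ y x) :
    P.χ x y = 0 ∨ P.χ x y = ε * Q.χ x y := by
  rw [P.alt x y, Q.alt x y]
  exact sg_sym_case _ _ _ h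

/-- from strictness, there is an entry zero in N but nonzero in M -/
lemma exists_degenerate {N M : Chirotope2 n} {ε : SignType} (hε : ε = 1 ∨ ε = -1)
    (hle : ∀ i j, N.χ i j = 0 ∨ N.χ i j = ε * M.χ i j) (hn : ¬ omLe M N) :
    ∃ x y, N.χ x y = 0 ∧ M.χ x y ≠ 0 := by
  by_contra hc
  push_neg at hc
  apply hn
  refine ⟨ε, hε, fun i j => ?_⟩
  by_cases hM : M.χ i j = 0
  · exact Or.inl hM
  · rcases hle i j with h0 | h0
    · exact absurd hM (by simpa using hc i j h0)
    · exact Or.inr (sg_eps_cancel ε _ _ hε h0)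

/- ============ counting lemmas ============ -/

lemma l_mono {N M : Chirotope2 n} (h : omLe N M) : lM N ≤ lM M :=
  Nat.card_le_card_of_injective
    (fun x : {i : Fin n // ¬ IsLoop N i} => (⟨x.1, nonloop_mono h x.2⟩ : {i : Fin n // ¬ IsLoop M i}))
    (fun a b hab => by apply Subtype.ext; simpa using congrArg Subtype.val hab)

noncomputable def classMap {N M : Chirotope2 n} (h : omLe N M) :
    {S : Set (Fin n) // ∃ i, ¬ IsLoop N i ∧ S = ParClass N i} →
    {S : Set (Fin n) // ∃ i, ¬ IsLoop M i ∧ S = ParClass M i} :=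
  fun S => ⟨ParClass M S.2.choose, S.2.choose, nonloop_mono h S.2.choose_spec.1, rfl⟩

lemma classMap_injective {N M : Chirotope2 n} (h : omLe N M) :
    Function.Injective (classMap h) := by
  intro S T hST
  have h1 : ParClass M S.2.choose = ParClass M T.2.choose := congrArg Subtype.val hST
  have h2 : Rel M S.2.choose T.2.choose := parClass_eq_iff.mp h1
  have h3 : N.χ S.2.choose T.2.choose = 0 := chi_zero_mono h (chi_zero_of_rel h2)
  have h4 : Rel N S.2.choose T.2.choose :=
    rel_of_chi_zero S.2.choose_spec.1 T.2.choose_spec.1 h3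
  have h5 : S.1 = T.1 := by
    rw [S.2.choose_spec.2, T.2.choose_spec.2]
    exact parClass_eq_iff.mpr h4
  exact Subtype.ext h5

lemma p_mono {N M : Chirotope2 n} (h : omLe N M) : pM N ≤ pM M :=
  Nat.card_le_card_of_injective (classMap h) (classMap_injective h)

/-- if both counts agree, the weak maps go both ways -/
lemma le_of_eq_counts {N M : Chirotope2 n} (h : omLe N M) (hl : lM N = lM M)
    (hp : pM N = pM M) : omLe M N := by
  obtain ⟨ε, hε, hle⟩ := h
  -- non-loop sets coincide
  have hLoopIff : ∀ i, ¬ IsLoop M i → ¬ IsLoop N i := by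
    have hinj : Function.Injective
        (fun x : {i : Fin n // ¬ IsLoop N i} => (⟨x.1, nonloop_mono ⟨ε, hε, hle⟩ x.2⟩ :
          {i : Fin n // ¬ IsLoop M i})) :=
      fun a b hab => by apply Subtype.ext; simpa using congrArg Subtype.val hab
    have hbij := (Nat.bijective_iff_injective_and_card _).mpr ⟨hinj, hl⟩
    intro i hi
    obtain ⟨x, hx⟩ := hbij.2 ⟨i, hi⟩
    have : x.1 = i := congrArg Subtype.val hx
    exact this ▸ x.2
  have hbijC := (Nat.bijective_iff_injective_and_card (classMap ⟨ε, hε, hle⟩)).mpr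
    ⟨classMap_injective ⟨ε, hε, hle⟩, hp⟩
  -- parallel classes coincide
  have hMzero : ∀ i j, N.χ i j = 0 → M.χ i j = 0 := by
    intro i j hz
    by_cases hiN : IsLoop N i
    · have hiM : IsLoop M i := by
        by_contra h'; exact hLoopIff i h' hiN
      exact hiM j
    by_cases hjN : IsLoop N j
    · have hjM : IsLoop M j := by
        by_contra h'; exact hLoopIff j h' hjN
      exact loop_col M hjM i
    have hrel : Rel N i j := rel_of_chi_zero hiN hjN hz
    have hiM := nonloop_mono ⟨ε, hε, hle⟩ hiN
    have hjM := nonloop_mono ⟨ε, hε, hle⟩ hjN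
    have keyS : ∀ w : Fin n, ¬ IsLoop N w → ∃ S : {S : Set (Fin n) // ∃ i, ¬ IsLoop N i ∧ S = ParClass N i}, ParClass M w = ParClass M S.2.choose ∧
        S.1 = ParClass N w := by
      intro w hwN
      obtain ⟨S, hS⟩ := hbijC.2 ⟨ParClass M w, ⟨w, nonloop_mono ⟨ε, hε, hle⟩ hwN, rfl⟩⟩
      have hval : ParClass M S.2.choose = ParClass M w := congrArg Subtype.val hS
      refine ⟨S, hval.symm, ?_⟩
      have h2 : Rel M S.2.choose w := parClass_eq_iff.mp hval
      have h3 : N.χ S.2.choose w = 0 := chi_zero_mono ⟨ε, hε, hle⟩ (chi_zero_of_rel h2)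
      have h4 : Rel N S.2.choose w := rel_of_chi_zero S.2.choose_spec.1 hwN h3
      rw [S.2.choose_spec.2]
      exact parClass_eq_iff.mpr h4
    obtain ⟨S, hS1, hS2⟩ := keyS i hiN
    obtain ⟨T, hT1, hT2⟩ := keyS j hjN
    have hST : S = T := by
      apply Subtype.ext
      rw [hS2, hT2]
      exact parClass_eq_iff.mpr hrel
    have : ParClass M i = ParClass M j := by
      rw [hS1, hT1, hST]
    exact chi_zero_of_rel (parClass_eq_iff.mp this)
  refine ⟨ε, hε, fun i j => ?_⟩
  rcases hle i j with h0 | h0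
  · exact Or.inl (hMzero i j h0)
  · exact Or.inr (sg_eps_cancel ε _ _ hε h0)

lemma lt_counts {N M : Chirotope2 n} (h : omLt N M) : lM N + pM N < lM M + pM M := by
  obtain ⟨hle, hnle⟩ := h
  have h1 := l_mono hle
  have h2 := p_mono hle
  rcases Nat.lt_or_ge (lM N + pM N) (lM M + pM M) with h' | h'
  · exact h'
  · exfalso
    exact hnle (le_of_eq_counts hle (by omega) (by omega))

lemma two_le_l (M : Chirotope2 n) : 2 ≤ lM M := by
  obtain ⟨a, b, hab⟩ := M.nonzero
  have ha : ¬ IsLoop M a := nonloop_left hab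
  have hb : ¬ IsLoop M b := nonloop_right hab
  have hne : a ≠ b := by rintro rfl; exact hab (chi_self M a)
  have : Nontrivial {i : Fin n // ¬ IsLoop M i} :=
    ⟨⟨⟨a, ha⟩, ⟨b, hb⟩, fun h => hne (show _ = _ from congrArg Subtype.val h)⟩⟩
  have := Fintype.ofFinite {i : Fin n // ¬ IsLoop M i}
  rw [lM, Nat.card_eq_fintype_card]
  exact Fintype.one_lt_card

lemma two_le_p (M : Chirotope2 n) : 2 ≤ pM M := by
  obtain ⟨a, b, hab⟩ := M.nonzero
  have ha : ¬ IsLoop M a := nonloop_left hab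
  have hb : ¬ IsLoop M b := nonloop_right hab
  have hne : ParClass M a ≠ ParClass M b := by
    intro h
    exact hab (chi_zero_of_rel (parClass_eq_iff.mp h))
  have : Nontrivial {S : Set (Fin n) // ∃ i, ¬ IsLoop M i ∧ S = ParClass M i} :=
    ⟨⟨⟨ParClass M a, a, ha, rfl⟩, ⟨ParClass M b, b, hb, rfl⟩,
      fun h => hne (show _ = _ from congrArg Subtype.val h)⟩⟩
  have := Fintype.ofFinite {S : Set (Fin n) // ∃ i, ¬ IsLoop M i ∧ S = ParClass M i}
  rw [pM, Nat.card_eq_fintype_card]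
  exact Fintype.one_lt_card

lemma p_le_l (M : Chirotope2 n) : pM M ≤ lM M := by
  refine Nat.card_le_card_of_injective
    (fun S : {S : Set (Fin n) // ∃ i, ¬ IsLoop M i ∧ S = ParClass M i} =>
      (⟨S.2.choose, S.2.choose_spec.1⟩ : {i : Fin n // ¬ IsLoop M i})) ?_
  intro S T h
  have : S.2.choose = T.2.choose := congrArg Subtype.val h
  apply Subtype.ext
  rw [S.2.choose_spec.2, T.2.choose_spec.2, this]

/- ============ generic cardinality helpers ============ -/

lemma le_card_succ {α β : Type} [Finite α] [Finite β] (f : α → Option β)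
    (hf : Function.Injective f) : Nat.card α ≤ Nat.card β + 1 := by
  have := Fintype.ofFinite α
  have := Fintype.ofFinite β
  rw [Nat.card_eq_fintype_card, Nat.card_eq_fintype_card]
  have := Fintype.card_le_of_injective f hf
  rwa [Fintype.card_option] at this

lemma three_distinct {α : Type} [Finite α] (h : 2 < Nat.card α) :
    ∃ a b c : α, a ≠ b ∧ a ≠ c ∧ b ≠ c := by
  have := Fintype.ofFinite α
  rw [Nat.card_eq_fintype_card] at h
  by_contra hc
  push_neg at hc
  have hnt : Nontrivial α := Fintype.one_lt_card_iff_nontrivial.mp (by omega)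
  obtain ⟨a, b, hab⟩ := hnt
  classical
  have hinj : Function.Injective (fun x : α => decide (x = a)) := by
    intro x y hxy
    simp only [decide_eq_decide] at hxy
    by_cases hx : x = a
    · exact hx.trans (hxy.mp hx).symm
    · exact hc a x y (Ne.symm hx) (fun h => hx (hxy.mpr h.symm))
  have := Fintype.card_le_of_injective _ hinj
  simp at this
  omega

lemma surj_two_collisions {α β : Type} [Finite α] [Finite β] (f : α → β)
    (h : Nat.card β + 2 ≤ Nat.card α) :
    (∃ a b c : α, a ≠ b ∧ a ≠ c ∧ b ≠ c ∧ f a = f b ∧ f a = f c) ∨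
    (∃ a b c d : α, a ≠ b ∧ c ≠ d ∧ f a = f b ∧ f c = f d ∧ f a ≠ f c) := by
  have := Fintype.ofFinite α
  have := Fintype.ofFinite β
  classical
  rw [Nat.card_eq_fintype_card, Nat.card_eq_fintype_card] at h
  obtain ⟨a, -, b, -, hab, hfab⟩ :=
    Finset.exists_ne_map_eq_of_card_lt_of_maps_to
      (s := (Finset.univ : Finset α)) (t := (Finset.univ : Finset β))
      (by simp; omega) (fun x _ => Finset.mem_univ (f x))
  obtain ⟨c, hc, d, hd, hcd, hfcd⟩ :=
    Finset.exists_ne_map_eq_of_card_lt_of_maps_to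
      (s := (Finset.univ.erase b : Finset α)) (t := (Finset.univ : Finset β))
      (by rw [Finset.card_erase_of_mem (Finset.mem_univ b)]; simp; omega)
      (fun x _ => Finset.mem_univ (f x))
  have hcb : c ≠ b := Finset.ne_of_mem_erase hc
  have hdb : d ≠ b := Finset.ne_of_mem_erase hd
  by_cases hfc : f c = f a
  · left
    by_cases hca : c = a
    · subst hca
      exact ⟨c, d, b, hcd, hcb, hdb, hfcd, hfab⟩
    · by_cases hda : d = a
      · exact ⟨a, c, b, Ne.symm hca, hab, hcb, hfc.symm, hfab⟩
      · exact ⟨c, d, a, hcd, hca, hda, hfcd, hfc⟩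
  · right
    exact ⟨a, b, c, d, hab, hcd, hfab, hfcd, fun h' => hfc h'.symm⟩

/- ============ class-counting under no-defect hypotheses ============ -/

lemma p_le_p_of_nodefect {N M : Chirotope2 n}
    (hLM : ∀ i, ¬ IsLoop N i → ¬ IsLoop M i)
    (hno : ∀ x y, ¬ IsLoop N x → ¬ IsLoop N y → N.χ x y = 0 → M.χ x y = 0)
    (hrep : ∀ w, ¬ IsLoop M w → ∃ u, ¬ IsLoop N u ∧ Rel M w u) :
    pM M ≤ pM N := by
  classical
  refine Nat.card_le_card_of_injective
    (fun S : {S : Set (Fin n) // ∃ i, ¬ IsLoop M i ∧ S = ParClass M i} =>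
      (⟨ParClass N (hrep S.2.choose S.2.choose_spec.1).choose,
        (hrep S.2.choose S.2.choose_spec.1).choose,
        (hrep S.2.choose S.2.choose_spec.1).choose_spec.1, rfl⟩ :
        {S : Set (Fin n) // ∃ i, ¬ IsLoop N i ∧ S = ParClass N i})) ?_
  intro S T h
  set u := (hrep S.2.choose S.2.choose_spec.1).choose with hu
  set v := (hrep T.2.choose T.2.choose_spec.1).choose with hv
  have huS : ¬ IsLoop N u ∧ Rel M S.2.choose u := (hrep S.2.choose S.2.choose_spec.1).choose_spec
  have hvT : ¬ IsLoop N v ∧ Rel M T.2.choose v := (hrep T.2.choose T.2.choose_spec.1).choose_spec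
  have h1 : ParClass N u = ParClass N v := by simpa using congrArg Subtype.val h
  have h2 : N.χ u v = 0 := chi_zero_of_rel (parClass_eq_iff.mp h1)
  have h3 : M.χ u v = 0 := hno u v huS.1 hvT.1 h2
  have h4 : Rel M u v := rel_of_chi_zero (hLM u huS.1) (hLM v hvT.1) h3
  apply Subtype.ext
  rw [S.2.choose_spec.2, T.2.choose_spec.2]
  rw [parClass_eq_iff.mpr huS.2, parClass_eq_iff.mpr hvT.2]
  exact parClass_eq_iff.mpr h4

/- ============ defect dichotomy (equal supports, p gap ≥ 2) ============ -/

lemma defect_dichotomy {N M : Chirotope2 n}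
    (hML : ∀ i, ¬ IsLoop M i → ¬ IsLoop N i)
    (hLM : ∀ i, ¬ IsLoop N i → ¬ IsLoop M i)
    (hz : ∀ i j, M.χ i j = 0 → N.χ i j = 0)
    (hp : pM N + 2 ≤ pM M) :
    (∃ u1 u2 u3 : Fin n, ¬ IsLoop N u1 ∧ ¬ IsLoop N u2 ∧ ¬ IsLoop N u3 ∧
       N.χ u1 u2 = 0 ∧ N.χ u1 u3 = 0 ∧ N.χ u2 u3 = 0 ∧
       M.χ u1 u2 ≠ 0 ∧ M.χ u1 u3 ≠ 0 ∧ M.χ u2 u3 ≠ 0) ∨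
    (∃ u1 u2 v1 v2 : Fin n, ¬ IsLoop N u1 ∧ ¬ IsLoop N u2 ∧ ¬ IsLoop N v1 ∧ ¬ IsLoop N v2 ∧
       N.χ u1 u2 = 0 ∧ M.χ u1 u2 ≠ 0 ∧ N.χ v1 v2 = 0 ∧ M.χ v1 v2 ≠ 0 ∧ ¬ Rel N u1 v1) := by
  classical
  set F : {S : Set (Fin n) // ∃ i, ¬ IsLoop M i ∧ S = ParClass M i} →
      {S : Set (Fin n) // ∃ i, ¬ IsLoop N i ∧ S = ParClass N i} :=
    fun S => ⟨ParClass N S.2.choose, S.2.choose, hML _ S.2.choose_spec.1, rfl⟩ with hF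
  -- basic facts about representatives
  have repM : ∀ S : {S : Set (Fin n) // ∃ i, ¬ IsLoop M i ∧ S = ParClass M i},
      ¬ IsLoop M S.2.choose ∧ S.1 = ParClass M S.2.choose := fun S => S.2.choose_spec
  -- key translation: distinct classes with equal F values give a defect pair
  have key : ∀ S T, S ≠ T → F S = F T →
      ¬ IsLoop N S.2.choose ∧ ¬ IsLoop N T.2.choose ∧
      N.χ S.2.choose T.2.choose = 0 ∧ M.χ S.2.choose T.2.choose ≠ 0 := by
    intro S T hST hFST
    have h1 : ParClass N S.2.choose = ParClass N T.2.choose := by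
      simpa [hF] using congrArg Subtype.val hFST
    refine ⟨hML _ (repM S).1, hML _ (repM T).1, chi_zero_of_rel (parClass_eq_iff.mp h1), ?_⟩
    intro hzM
    apply hST
    apply Subtype.ext
    rw [(repM S).2, (repM T).2]
    exact parClass_eq_iff.mpr (rel_of_chi_zero (repM S).1 (repM T).1 hzM)
  rcases surj_two_collisions F (by simpa [pM] using hp) with
    ⟨S, T, U, hST, hSU, hTU, h1, h2⟩ | ⟨S, T, U, V, hST, hUV, h1, h2, h3⟩
  · left
    obtain ⟨a1, a2, a3, a4⟩ := key S T hST h1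
    obtain ⟨-, b2, b3, b4⟩ := key S U hSU h2
    obtain ⟨-, -, c3, c4⟩ := key T U hTU (h1.symm.trans h2)
    exact ⟨S.2.choose, T.2.choose, U.2.choose, a1, a2, b2, a3, b3, c3, a4, b4, c4⟩
  · right
    obtain ⟨a1, a2, a3, a4⟩ := key S T hST h1
    obtain ⟨b1, b2, b3, b4⟩ := key U V hUV h2
    refine ⟨S.2.choose, T.2.choose, U.2.choose, V.2.choose, a1, a2, b1, b2, a3, a4, b3, b4, ?_⟩
    intro hrel
    apply h3
    apply Subtype.ext
    simp only [hF]
    exact parClass_eq_iff.mpr hrel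

/- ============ betweenness and adjacency ============ -/

open Classical in
noncomputable def betwF (M : Chirotope2 n) (a b : Fin n) : Finset (Fin n) :=
  Finset.univ.filter (fun k => M.χ a k ≠ 0 ∧ M.χ a k * M.χ k b = M.χ a b)

lemma mem_betwF {M : Chirotope2 n} {a b k : Fin n} :
    k ∈ betwF M a b ↔ M.χ a k ≠ 0 ∧ M.χ a k * M.χ k b = M.χ a b := by
  simp [betwF]

lemma betw_not_self {M : Chirotope2 n} {a k : Fin n} : k ∉ betwF M a k := by
  rw [mem_betwF]
  rintro ⟨h1, h2⟩
  rw [chi_self, mul_zero] at h2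
  exact h1 h2.symm

lemma sgT1 : ∀ ρ cam cmk cak cab : SignType, cam * cmk = cak →
    cak * -(ρ * cmk) = cab → cab = -(ρ * -cam) → cab ≠ 0 → (ρ = 1 ∨ ρ = -1) → False := by decide

lemma sgT2 : ∀ cab cam cmk cak ckb cmb : SignType,
    cam * cmk = cak → cak * ckb = cab → cab ≠ 0 → cmb ≠ 0 →
    GPc (cab * cmk) (cmb * cak) (ckb * cam) → cam * cmb = cab := by decide

lemma betw_chi_mb {M : Chirotope2 n} {a b k m : Fin n} (hab : M.χ a b ≠ 0)
    (hk : k ∈ betwF M a b) (hm : m ∈ betwF M a k) : M.χ m b ≠ 0 := by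
  obtain ⟨hak, ek⟩ := mem_betwF.mp hk
  obtain ⟨ham, em⟩ := mem_betwF.mp hm
  by_contra h0
  have hrel : Rel M m b :=
    rel_of_chi_zero (nonloop_right ham) (nonloop_right hab) (not_not.mp (fun h => h h0))
  obtain ⟨ρ, hρ, hρk⟩ := rel_sign hrel
  have e2 : M.χ k b = -(ρ * M.χ m k) := by rw [M.alt k b, hρk k]
  have e3 : M.χ a b = -(ρ * -(M.χ a m)) := by rw [M.alt a b, hρk a, M.alt m a]
  exact sgT1 ρ (M.χ a m) (M.χ m k) (M.χ a k) (M.χ a b) em (e2 ▸ ek) e3 hab hρ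

lemma betw_trans {M : Chirotope2 n} {a b k m : Fin n} (hab : M.χ a b ≠ 0)
    (hk : k ∈ betwF M a b) (hm : m ∈ betwF M a k) : m ∈ betwF M a b := by
  obtain ⟨hak, ek⟩ := mem_betwF.mp hk
  obtain ⟨ham, em⟩ := mem_betwF.mp hm
  have hmb : M.χ m b ≠ 0 := betw_chi_mb hab hk hm
  refine mem_betwF.mpr ⟨ham, ?_⟩
  exact sgT2 _ _ _ _ _ _ em ek hab hmb (gp' M b a m k)

lemma adjacent_of_empty {M : Chirotope2 n} {a b : Fin n} (hab : M.χ a b ≠ 0)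
    (he : betwF M a b = ∅) :
    ∀ k, M.χ a k ≠ 0 → M.χ k b ≠ 0 → M.χ a k * M.χ k b = -(M.χ a b) := by
  intro k h1 h2
  have hk : k ∉ betwF M a b := he ▸ Finset.notMem_empty k
  rw [mem_betwF] at hk
  push_neg at hk
  rcases sg_dichot _ _ _ h1 h2 hab with h | h
  · exact absurd h (hk h1)
  · exact h

lemma exists_adjacent (M : Chirotope2 n) {a k0 : Fin n} (h : M.χ a k0 ≠ 0) :
    ∃ b, M.χ a b ≠ 0 ∧
      ∀ k, M.χ a k ≠ 0 → M.χ k b ≠ 0 → M.χ a k * M.χ k b = -(M.χ a b) := by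
  classical
  obtain ⟨b, hbT, hmin⟩ := Finset.exists_min_image
    (Finset.univ.filter (fun j => M.χ a j ≠ 0)) (fun j => (betwF M a j).card)
    ⟨k0, by simp [h]⟩
  have hab : M.χ a b ≠ 0 := (Finset.mem_filter.mp hbT).2
  refine ⟨b, hab, adjacent_of_empty hab ?_⟩
  by_contra hne
  obtain ⟨k, hk⟩ := Finset.nonempty_iff_ne_empty.mpr hne
  have hak : M.χ a k ≠ 0 := (mem_betwF.mp hk).1
  have hsub : betwF M a k ⊆ betwF M a b := fun m hm => betw_trans hab hk hm
  have hlt : (betwF M a k).card < (betwF M a b).card :=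
    Finset.card_lt_card (((Finset.ssubset_iff_of_subset hsub)).mpr ⟨k, hk, betw_not_self⟩)
  have := hmin k (Finset.mem_filter.mpr ⟨Finset.mem_univ k, hak⟩)
  omega

lemma exists_adjacent_in (M : Chirotope2 n) (C : Set (Fin n)) {a0 b0 : Fin n}
    (ha0 : a0 ∈ C) (hb0 : b0 ∈ C) (hab0 : M.χ a0 b0 ≠ 0)
    (hGood : (∀ k ∈ betwF M a0 b0, k ∈ C) ∨ (∀ k ∈ betwF M b0 a0, k ∈ C)) :
    ∃ a b, a ∈ C ∧ b ∈ C ∧ M.χ a b ≠ 0 ∧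
      ∀ k, M.χ a k ≠ 0 → M.χ k b ≠ 0 → M.χ a k * M.χ k b = -(M.χ a b) := by
  classical
  have hba0 : M.χ b0 a0 ≠ 0 := by rw [M.alt b0 a0]; exact fun h => hab0 (by have := congrArg Neg.neg h; rwa [neg_neg] at this; )
  have hne : (Finset.univ.filter (fun p : Fin n × Fin n =>
      p.1 ∈ C ∧ p.2 ∈ C ∧ M.χ p.1 p.2 ≠ 0 ∧ ∀ k ∈ betwF M p.1 p.2, k ∈ C)).Nonempty := by
    rcases hGood with hG | hG
    · exact ⟨(a0, b0), by simp [ha0, hb0, hab0]; exact hG⟩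
    · exact ⟨(b0, a0), by simp [ha0, hb0, hba0]; exact hG⟩
  obtain ⟨p, hpT, hmin⟩ := Finset.exists_min_image _
    (fun p : Fin n × Fin n => (betwF M p.1 p.2).card) hne
  obtain ⟨hpC1, hpC2, hpab, hparc⟩ := (Finset.mem_filter.mp hpT).2
  refine ⟨p.1, p.2, hpC1, hpC2, hpab, adjacent_of_empty hpab ?_⟩
  by_contra hne'
  obtain ⟨k, hk⟩ := Finset.nonempty_iff_ne_empty.mpr hne'
  have hak : M.χ p.1 k ≠ 0 := (mem_betwF.mp hk).1
  have hkC : k ∈ C := hparc k hk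
  have hsub : betwF M p.1 k ⊆ betwF M p.1 p.2 := fun m hm => betw_trans hpab hk hm
  have hlt : (betwF M p.1 k).card < (betwF M p.1 p.2).card :=
    Finset.card_lt_card (((Finset.ssubset_iff_of_subset hsub)).mpr ⟨k, hk, betw_not_self⟩)
  have := hmin (p.1, k) (Finset.mem_filter.mpr ⟨Finset.mem_univ _,
    ⟨hpC1, hkC, hak, fun m hm => hparc m (hsub hm)⟩⟩)
  simp at this
  omega

/- ============ transforms of chirotopes ============ -/

lemma sg_alt_tf : ∀ a b X Y : SignType, X = -Y → a * b * X = -(b * a * Y) := by decide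
lemma sg_jug1 : ∀ ax a0 a1 a2 X Y : SignType,
    (a0*ax*X) * (a1*a2*Y) = (ax*(a0*(a1*a2))) * (X*Y) := by decide
lemma sg_jug2 : ∀ ax a0 a1 a2 X Y : SignType,
    (a1*ax*X) * (a0*a2*Y) = (ax*(a0*(a1*a2))) * (X*Y) := by decide
lemma sg_jug3 : ∀ ax a0 a1 a2 X Y : SignType,
    (a2*ax*X) * (a0*a1*Y) = (ax*(a0*(a1*a2))) * (X*Y) := by decide
lemma GPc_smul : ∀ s p q r : SignType, GPc p q r → GPc (s*p) (s*q) (s*r) := by decide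

def transform (M : Chirotope2 n) (r : Fin n → Fin n) (c : Fin n → SignType)
    (hnz : ∃ x y, c x * c y * M.χ (r x) (r y) ≠ 0) : Chirotope2 n where
  χ x y := c x * c y * M.χ (r x) (r y)
  nonzero := hnz
  alt i j := sg_alt_tf _ _ _ _ (M.alt (r i) (r j))
  gp x y0 y1 y2 := by
    show GPc _ _ _
    rw [sg_jug1 (c x) (c y0) (c y1) (c y2), sg_jug2 (c x) (c y0) (c y1) (c y2),
      sg_jug3 (c x) (c y0) (c y1) (c y2)]
    exact GPc_smul _ _ _ _ (gp' M (r x) (r y0) (r y1) (r y2))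

@[simp] lemma transform_chi (M : Chirotope2 n) (r : Fin n → Fin n) (c : Fin n → SignType)
    (hnz : ∃ x y, c x * c y * M.χ (r x) (r y) ≠ 0) (x y : Fin n) :
    (transform M r c hnz).χ x y = c x * c y * M.χ (r x) (r y) := rfl

/- ============ construction 1: clone a loop onto a parallel class ============ -/

lemma sg_clone : ∀ σ ε m : SignType, (σ = 1 ∨ σ = -1) → (ε = 1 ∨ ε = -1) →
    σ * 1 * (ε * (σ * m)) = ε * m := by decide

lemma build_clone {N M : Chirotope2 n} {ε : SignType} (hε : ε = 1 ∨ ε = -1)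
    (hle : ∀ i j, N.χ i j = 0 ∨ N.χ i j = ε * M.χ i j)
    {i j : Fin n} (hiN : IsLoop N i) (hjN : ¬ IsLoop N j)
    (hrel : Rel M i j) :
    ∃ N' : Chirotope2 n, omLe N N' ∧ omLe N' M ∧ ¬ omLe N' N ∧
      ∀ x y, x ≠ i → y ≠ i → N'.χ x y = N.χ x y := by
  classical
  obtain ⟨σ, hσ, hσk⟩ := rel_sign hrel
  set r : Fin n → Fin n := fun x => if x = i then j else x with hr
  set c : Fin n → SignType := fun x => if x = i then σ else 1 with hc
  have hnz : ∃ x y, c x * c y * N.χ (r x) (r y) ≠ 0 := by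
    obtain ⟨x0, y0, h0⟩ := N.nonzero
    have hx0 : x0 ≠ i := fun h => h0 (h ▸ hiN y0)
    have hy0 : y0 ≠ i := fun h => h0 (h ▸ loop_col N hiN x0)
    exact ⟨x0, y0, by simp [hr, hc, hx0, hy0, h0]⟩
  have hunch : ∀ x y, x ≠ i → y ≠ i → (transform N r c hnz).χ x y = N.χ x y := by
    intro x y hx hy
    simp [hr, hc, hx, hy]
  refine ⟨transform N r c hnz, ?_, ?_, ?_, hunch⟩
  · refine ⟨1, Or.inl rfl, fun x y => ?_⟩
    by_cases hx : x = i
    · exact Or.inl (hx ▸ hiN y)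
    by_cases hy : y = i
    · exact Or.inl (hy ▸ loop_col N hiN x)
    · rw [one_mul, hunch x y hx hy]
      exact Or.inr rfl
  · have hrow : ∀ y, (transform N r c hnz).χ i y = 0 ∨
        (transform N r c hnz).χ i y = ε * M.χ i y := by
      intro y
      by_cases hy : y = i
      · subst hy; left; simp [hr, hc, chi_self]
      · have hch : (transform N r c hnz).χ i y = σ * 1 * N.χ j y := by simp [hr, hc, hy]
        rcases hle j y with h0 | h0
        · left; rw [hch, h0, mul_zero]
        · right; rw [hch, h0, hσk y]; exact sg_clone σ ε (M.χ i y) hσ hε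
    refine ⟨ε, hε, fun x y => ?_⟩
    by_cases hx : x = i
    · exact hx ▸ hrow y
    by_cases hy : y = i
    · subst hy; exact omLe_sym_case (hrow x)
    · rw [hunch x y hx hy]; exact hle x y
  · obtain ⟨k, hk⟩ : ∃ k, N.χ j k ≠ 0 := by simpa [IsLoop] using hjN
    have hki : k ≠ i := fun h => hk (h ▸ loop_col N hiN j)
    have hσ0 : σ * 1 ≠ 0 := by rcases hσ with h | h <;> simp [h]
    have hnz2 : (transform N r c hnz).χ i k ≠ 0 := by
      have hval : (transform N r c hnz).χ i k = σ * 1 * N.χ j k := by simp [hr, hc, hki]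
      rw [hval]; exact sg_mul_ne _ _ hσ0 hk
    rintro ⟨ε', hε', hle'⟩
    rcases hle' i k with h0 | h0
    · exact hnz2 h0
    · rw [hiN k, mul_zero] at h0; exact hnz2 h0

/- ============ construction 2: make one element of a fat class a loop ============ -/

lemma build_loop {M : Chirotope2 n} {a a' : Fin n} (hrel : Rel M a a') (hne : a' ≠ a)
    (haM : ¬ IsLoop M a) : ∃ N : Chirotope2 n, omLt N M := by
  classical
  set c : Fin n → SignType := fun x => if x = a then 0 else 1 with hc
  obtain ⟨k0, hk0⟩ : ∃ k, M.χ a k ≠ 0 := by simpa [IsLoop] using haM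
  obtain ⟨ρ, hρ, hρk⟩ := rel_sign hrel
  have ha'k0 : M.χ a' k0 ≠ 0 := by
    rw [hρk k0]
    exact sg_mul_ne _ _ (by rcases hρ with h | h <;> simp [h]) hk0
  have hk0a : k0 ≠ a := fun h => hk0 (h ▸ chi_self M a)
  have hnz : ∃ x y, c x * c y * M.χ (id x) (id y) ≠ 0 :=
    ⟨a', k0, by simp [hc, hne, hk0a, ha'k0]⟩
  set N := transform M id c hnz with hN
  have hza : ∀ y, N.χ a y = 0 := by intro y; simp [hN, hc]
  refine ⟨N, ⟨1, Or.inl rfl, fun x y => ?_⟩, ?_⟩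
  · by_cases hx : x = a
    · exact Or.inl (hx ▸ hza y)
    by_cases hy : y = a
    · subst hy
      left
      simp [hN, hc]
    · right; rw [one_mul]; simp [hN, hc, hx, hy]
  · rintro ⟨ε', hε', hle'⟩
    rcases hle' a k0 with h0 | h0
    · exact hk0 h0
    · rw [hza k0, mul_zero] at h0; exact hk0 h0

/- ============ construction 3: merge a parallel class onto an adjacent one ============ -/

lemma sg_merge1 : ∀ ρ cab cak ckb : SignType, cak * ckb = -cab → ckb ≠ 0 →
    (ρ * cab) * 1 * (-ckb) = ρ * cak := by decide

lemma build_merge {M : Chirotope2 n} {a b : Fin n} (hab : M.χ a b ≠ 0)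
    (harc : ∀ k, M.χ a k ≠ 0 → M.χ k b ≠ 0 → M.χ a k * M.χ k b = -(M.χ a b))
    {x0 y0 : Fin n} (hx0 : ¬ Rel M a x0) (hy0 : ¬ Rel M a y0) (hxy0 : M.χ x0 y0 ≠ 0) :
    ∃ N' : Chirotope2 n, omLe N' M ∧ N'.χ a b = 0 ∧
      (∀ x y, ¬ Rel M a x → ¬ Rel M a y → N'.χ x y = M.χ x y) ∧
      (∀ x k, Rel M a x → M.χ a k ≠ 0 → M.χ k b ≠ 0 → N'.χ x k = M.χ x k) ∧
      (∀ x y, Rel M a x → Rel M a y → N'.χ x y = 0) ∧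
      (∃ k, N'.χ a k ≠ 0) := by
  classical
  have haM : ¬ IsLoop M a := nonloop_left hab
  have hbM : ¬ IsLoop M b := nonloop_right hab
  have hbA : ¬ Rel M a b := fun h => hab (chi_zero_of_rel h)
  set r : Fin n → Fin n := fun x => if Rel M a x then b else x with hr
  set c : Fin n → SignType := fun x => if Rel M a x then M.χ x b else 1 with hc
  have hnz : ∃ x y, c x * c y * M.χ (r x) (r y) ≠ 0 :=
    ⟨x0, y0, by simp [hr, hc, hx0, hy0, hxy0]⟩
  set N' := transform M r c hnz with hN'
  have c1 : ∀ x y, ¬ Rel M a x → ¬ Rel M a y → N'.χ x y = M.χ x y := by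
    intro x y hx hy; simp [hN', hr, hc, hx, hy]
  have c2 : ∀ x y, Rel M a x → Rel M a y → N'.χ x y = 0 := by
    intro x y hx hy; simp [hN', hr, hc, hx, hy, chi_self]
  have c3 : ∀ x y, Rel M a x → ¬ Rel M a y → N'.χ x y = M.χ x b * 1 * M.χ b y := by
    intro x y hx hy; simp [hN', hr, hc, hx, hy]
  have c4 : N'.χ a b = 0 := by
    rw [c3 a b (rel_refl M a) hbA, chi_self, mul_zero]
  have m5 : ∀ x k, Rel M a x → M.χ a k ≠ 0 → M.χ k b ≠ 0 → N'.χ x k = M.χ x k := by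
    intro x k hx hak hkb
    have hkA : ¬ Rel M a k := fun h => hak (chi_zero_of_rel h)
    obtain ⟨ρ, hρ, hρk⟩ := rel_sign hx
    rw [c3 x k hx hkA, hρk b, M.alt b k, hρk k]
    exact sg_merge1 ρ (M.χ a b) (M.χ a k) (M.χ k b) (harc k hak hkb) hkb
  refine ⟨N', ?_, c4, c1, m5, c2, ?_⟩
  · have hhalf : ∀ x y, Rel M a x → ¬ Rel M a y →
        (N'.χ x y = 0 ∨ N'.χ x y = 1 * M.χ x y) := by
      intro x y hx hy
      by_cases hby : M.χ b y = 0
      · left; rw [c3 x y hx hy, hby, mul_zero]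
      · by_cases hyL : IsLoop M y
        · exact absurd (loop_col M hyL b) hby
        have hay : M.χ a y ≠ 0 := by
          intro h
          exact hy (rel_of_chi_zero haM hyL h)
        have hyb : M.χ y b ≠ 0 := by
          rw [M.alt y b]
          intro h
          apply hby
          have := congrArg Neg.neg h
          rwa [neg_neg] at this
        right; rw [one_mul]; exact m5 x y hx hay hyb
    refine ⟨1, Or.inl rfl, fun x y => ?_⟩
    by_cases hx : Rel M a x
    · by_cases hy : Rel M a y
      · exact Or.inl (c2 x y hx hy)
      · exact hhalf x y hx hy
    · by_cases hy : Rel M a y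
      · exact omLe_sym_case (hhalf y x hy hx)
      · right; rw [one_mul]; exact c1 x y hx hy
  · -- a is not a loop in N'
    have hx0M : ¬ IsLoop M x0 := nonloop_left hxy0
    have hy0M : ¬ IsLoop M y0 := nonloop_right hxy0
    have hbx : M.χ b x0 ≠ 0 ∨ M.χ b y0 ≠ 0 := by
      by_contra hcon
      push_neg at hcon
      have h1 : Rel M b x0 := rel_of_chi_zero hbM hx0M hcon.1
      have h2 : Rel M b y0 := rel_of_chi_zero hbM hy0M hcon.2
      exact hxy0 (chi_zero_of_rel (rel_trans (rel_symm h1) h2))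
    rcases hbx with h | h
    · exact ⟨x0, by rw [c3 a x0 (rel_refl M a) hx0]
                    exact sg_mul_ne _ _ (sg_mul_ne _ _ hab (by decide)) h⟩
    · exact ⟨y0, by rw [c3 a y0 (rel_refl M a) hy0]
                    exact sg_mul_ne _ _ (sg_mul_ne _ _ hab (by decide)) h⟩

/- ============ helpers ============ -/

lemma rel_nonloop {M : Chirotope2 n} {i j : Fin n} (h : Rel M i j) (hi : ¬ IsLoop M i) :
    ¬ IsLoop M j := by
  intro hj
  apply hi
  intro k
  rcases h with h | h
  · rw [← h k]; exact hj k
  · have h2 := h k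
    rw [hj k] at h2
    have h3 := congrArg Neg.neg h2
    rw [neg_neg, neg_zero] at h3
    exact h3.symm

lemma chiM_ne_of_chiN {N M : Chirotope2 n} {ε : SignType}
    (hle : ∀ i j, N.χ i j = 0 ∨ N.χ i j = ε * M.χ i j)
    {x y : Fin n} (h : N.χ x y ≠ 0) : M.χ x y ≠ 0 := by
  rcases hle x y with h0 | h0
  · exact absurd h0 h
  · intro hM; rw [hM, mul_zero] at h0; exact h h0

lemma sgB1 : ∀ ε τ p q w : SignType, ε*q = τ*(ε*p) → p ≠ 0 → p * -q = w →
    (ε = 1 ∨ ε = -1) → (τ = 1 ∨ τ = -1) → τ = -w := by decide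
lemma sgB2 : ∀ ε τ p q w : SignType, ε*p = τ*(ε*q) → q ≠ 0 → p * -q = -w →
    (ε = 1 ∨ ε = -1) → (τ = 1 ∨ τ = -1) → τ = w := by decide
lemma sgB3 : ∀ w : SignType, w ≠ 0 → -w = w → False := by decide

/- ============ the case of equal supports: split a fat class ============ -/

lemma build_B {N M : Chirotope2 n} {ε : SignType} (hε : ε = 1 ∨ ε = -1)
    (hle : ∀ i j, N.χ i j = 0 ∨ N.χ i j = ε * M.χ i j)
    (hML : ∀ w, ¬ IsLoop M w → ¬ IsLoop N w)
    {u1 u2 : Fin n} (hu1 : ¬ IsLoop N u1) (hu2 : ¬ IsLoop N u2)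
    (hz12 : N.χ u1 u2 = 0) (hM12 : M.χ u1 u2 ≠ 0)
    (hwit : ∀ a, Rel N u1 a →
      ∃ z w, N.χ z w = 0 ∧ M.χ z w ≠ 0 ∧ ¬ Rel M a z ∧ ¬ Rel M a w) :
    ∃ N', omLt N N' ∧ omLt N' M := by
  have hleNM : omLe N M := ⟨ε, hε, hle⟩
  have hrel12 : Rel N u1 u2 := rel_of_chi_zero hu1 hu2 hz12
  obtain ⟨τ, hτ, hτk⟩ := rel_sign hrel12
  -- the whole N-parallel class of u1 is captured by betweenness
  have hGood : (∀ k ∈ betwF M u1 u2, k ∈ {x | Rel N u1 x}) ∨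
      (∀ k ∈ betwF M u2 u1, k ∈ {x | Rel N u1 x}) := by
    by_contra hcon
    push_neg at hcon
    obtain ⟨⟨k1, hk1b, hk1⟩, ⟨k2, hk2b, hk2⟩⟩ := hcon
    obtain ⟨ha1, he1⟩ := mem_betwF.mp hk1b
    obtain ⟨ha2, he2⟩ := mem_betwF.mp hk2b
    -- k1 facts
    have hk1M : ¬ IsLoop M k1 := nonloop_right ha1
    have hk1N : ¬ IsLoop N k1 := hML _ hk1M
    have hN1 : N.χ u1 k1 ≠ 0 := fun h => hk1 (rel_of_chi_zero hu1 hk1N h)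
    have hN2 : N.χ u2 k1 ≠ 0 := fun h =>
      hk1 (rel_trans hrel12 (rel_of_chi_zero hu2 hk1N h))
    have hMv1 : N.χ u1 k1 = ε * M.χ u1 k1 := (hle u1 k1).resolve_left hN1
    have hMv2 : N.χ u2 k1 = ε * M.χ u2 k1 := (hle u2 k1).resolve_left hN2
    have htau1 : τ = -(M.χ u1 u2) := by
      have heq : ε * M.χ u2 k1 = τ * (ε * M.χ u1 k1) := by
        rw [← hMv1, ← hMv2]; exact hτk k1
      refine sgB1 ε τ (M.χ u1 k1) (M.χ u2 k1) (M.χ u1 u2) heq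
        (fun h => ha1 h) ?_ hε hτ
      rw [← M.alt k1 u2]; exact he1
    -- k2 facts
    have hk2M : ¬ IsLoop M k2 := nonloop_right ha2
    have hk2N : ¬ IsLoop N k2 := hML _ hk2M
    have hN1' : N.χ u1 k2 ≠ 0 := fun h => hk2 (rel_of_chi_zero hu1 hk2N h)
    have hN2' : N.χ u2 k2 ≠ 0 := fun h =>
      hk2 (rel_trans hrel12 (rel_of_chi_zero hu2 hk2N h))
    have hMv1' : N.χ u1 k2 = ε * M.χ u1 k2 := (hle u1 k2).resolve_left hN1'
    have hMv2' : N.χ u2 k2 = ε * M.χ u2 k2 := (hle u2 k2).resolve_left hN2'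
    have htau2 : τ = M.χ u1 u2 := by
      have heq : ε * M.χ u2 k2 = τ * (ε * M.χ u1 k2) := by
        rw [← hMv1', ← hMv2']; exact hτk k2
      refine sgB2 ε τ (M.χ u2 k2) (M.χ u1 k2) (M.χ u1 u2) heq
        (fun h => hN1' (by rw [hMv1', h, mul_zero])) ?_ hε hτ
      rw [← M.alt k2 u1, ← M.alt u2 u1]; exact he2
    exact sgB3 _ hM12 (htau1 ▸ htau2)
  obtain ⟨a, b, haC, hbC, hab, harc⟩ := exists_adjacent_in M {x | Rel N u1 x}
    (rel_refl N u1) hrel12 hM12 hGood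
  obtain ⟨z, w, hzw0, hzwM, hza, hwa⟩ := hwit a haC
  obtain ⟨N', hleM', hab0, c1, m5, c2, -⟩ := build_merge hab harc hza hwa hzwM
  -- basic facts about a, b
  have haN : ¬ IsLoop N a := rel_nonloop haC hu1
  have hbN : ¬ IsLoop N b := rel_nonloop hbC hu1
  have haM : ¬ IsLoop M a := nonloop_mono hleNM haN
  have hbM : ¬ IsLoop M b := nonloop_mono hleNM hbN
  -- membership in the merged class transfers to N-class of u1
  have hAC : ∀ x, ¬ IsLoop N x → Rel M a x → Rel N u1 x := by
    intro x hxN hax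
    have h0 : N.χ a x = 0 := chi_zero_mono hleNM (chi_zero_of_rel hax)
    exact rel_trans haC (rel_of_chi_zero haN hxN h0)
  -- key: changed entries still compare
  have hm5' : ∀ x y, ¬ IsLoop N x → ¬ IsLoop N y → N.χ x y ≠ 0 → Rel M a x →
      ¬ Rel M a y → N'.χ x y = M.χ x y := by
    intro x y hxN hyN hNxy hax hay
    have hyM : ¬ IsLoop M y := nonloop_mono hleNM hyN
    have h1 : M.χ a y ≠ 0 := fun h => hay (rel_of_chi_zero haM hyM h)
    have h2 : M.χ y b ≠ 0 := by
      intro h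
      have hrel : Rel M y b := rel_of_chi_zero hyM hbM h
      have h0 : N.χ y b = 0 := chi_zero_mono hleNM h
      have hyC : Rel N u1 y := rel_trans hbC (rel_symm (rel_of_chi_zero hyN hbN h0))
      have hxC : Rel N u1 x := hAC x hxN hax
      exact hNxy (chi_zero_of_rel (rel_trans (rel_symm hxC) hyC))
    exact m5 x y hax h1 h2
  refine ⟨N', ⟨⟨ε, hε, ?_⟩, ?_⟩, hleM', ?_⟩
  · -- omLe N N'
    intro x y
    by_cases hNxy : N.χ x y = 0
    · exact Or.inl hNxy
    have hxN : ¬ IsLoop N x := nonloop_left hNxy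
    have hyN : ¬ IsLoop N y := nonloop_right hNxy
    have hval : N.χ x y = ε * M.χ x y := (hle x y).resolve_left hNxy
    by_cases hax : Rel M a x
    · by_cases hay : Rel M a y
      · exfalso
        have hxC := hAC x hxN hax
        have hyC := hAC y hyN hay
        exact hNxy (chi_zero_of_rel (rel_trans (rel_symm hxC) hyC))
      · right; rw [hm5' x y hxN hyN hNxy hax hay]; exact hval
    · by_cases hay : Rel M a y
      · right
        have hNyx : N.χ y x ≠ 0 := by
          rw [N.alt y x]
          intro h
          apply hNxy
          have := congrArg Neg.neg h
          rwa [neg_neg, neg_zero] at this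
        have h5 := hm5' y x hyN hxN hNyx hay hax
        have : N'.χ x y = M.χ x y := by
          rw [N'.alt x y, h5, ← M.alt x y]
        rw [this]; exact hval
      · right; rw [c1 x y hax hay]; exact hval
  · -- ¬ omLe N' N
    rintro ⟨ε', hε', hle'⟩
    have hval : N'.χ z w = M.χ z w := c1 z w hza hwa
    rcases hle' z w with h0 | h0
    · rw [hval] at h0; exact hzwM h0
    · rw [hval, hzw0, mul_zero] at h0; exact hzwM h0
  · -- ¬ omLe M N'
    rintro ⟨ε', hε', hle'⟩
    rcases hle' a b with h0 | h0
    · exact hab h0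
    · rw [hab0, mul_zero] at h0; exact hab h0

/- ============ the middle-element lemma ============ -/

lemma exists_middle {N M : Chirotope2 n} (hlt : omLt N M)
    (hgap : lM N + pM N + 2 ≤ lM M + pM M) : ∃ N', omLt N N' ∧ omLt N' M := by
  classical
  obtain ⟨⟨ε, hε, hle⟩, hnle⟩ := hlt
  have hleNM : omLe N M := ⟨ε, hε, hle⟩
  by_cases hD : ∃ i, IsLoop N i ∧ ¬ IsLoop M i
  · obtain ⟨i, hiN, hiM⟩ := hD
    by_cases h1 : ∃ j, ¬ IsLoop N j ∧ Rel M i j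
    · obtain ⟨j, hjN, hrelij⟩ := h1
      -- find a defect pair away from i
      have hwit : ∃ x y, x ≠ i ∧ y ≠ i ∧ N.χ x y = 0 ∧ M.χ x y ≠ 0 := by
        by_cases h2 : ∃ i₂, IsLoop N i₂ ∧ ¬ IsLoop M i₂ ∧ i₂ ≠ i
        · obtain ⟨i₂, hi₂N, hi₂M, hi₂ne⟩ := h2
          obtain ⟨x0, y0, h0⟩ := N.nonzero
          have hx0N : ¬ IsLoop N x0 := nonloop_left h0
          have hy0N : ¬ IsLoop N y0 := nonloop_right h0
          have hM0 : M.χ x0 y0 ≠ 0 := chiM_ne_of_chiN hle h0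
          have hx0i : x0 ≠ i := fun h => hx0N (h ▸ hiN)
          have hy0i : y0 ≠ i := fun h => hy0N (h ▸ hiN)
          have hkey : M.χ i₂ x0 ≠ 0 ∨ M.χ i₂ y0 ≠ 0 := by
            by_contra hcon
            push_neg at hcon
            have h1' : Rel M i₂ x0 := rel_of_chi_zero hi₂M
              (nonloop_mono hleNM hx0N) hcon.1
            have h2' : Rel M i₂ y0 := rel_of_chi_zero hi₂M
              (nonloop_mono hleNM hy0N) hcon.2
            exact hM0 (chi_zero_of_rel (rel_trans (rel_symm h1') h2'))
          rcases hkey with h | h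
          · exact ⟨i₂, x0, hi₂ne, hx0i, hi₂N x0, h⟩
          · exact ⟨i₂, y0, hi₂ne, hy0i, hi₂N y0, h⟩
        · by_cases h3 : ∃ x y, ¬ IsLoop N x ∧ ¬ IsLoop N y ∧ N.χ x y = 0 ∧ M.χ x y ≠ 0
          · obtain ⟨x, y, hxN, hyN, hz, hM⟩ := h3
            exact ⟨x, y, fun h => hxN (h ▸ hiN), fun h => hyN (h ▸ hiN), hz, hM⟩
          · exfalso
            have hno : ∀ x y, ¬ IsLoop N x → ¬ IsLoop N y → N.χ x y = 0 → M.χ x y = 0 := by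
              intro x y hx hy hz
              by_contra hM
              exact h3 ⟨x, y, hx, hy, hz, hM⟩
            have hrep : ∀ w, ¬ IsLoop M w → ∃ u, ¬ IsLoop N u ∧ Rel M w u := by
              intro w hw
              by_cases hwN : IsLoop N w
              · have hwi : w = i := by
                  by_contra hne
                  exact h2 ⟨w, hwN, hw, hne⟩
                exact ⟨j, hjN, hwi ▸ hrelij⟩
              · exact ⟨w, hwN, rel_refl M w⟩
            have hp := p_le_p_of_nodefect (fun x hx => nonloop_mono hleNM hx) hno hrep
            have hl : lM M ≤ lM N + 1 := by
              refine le_card_succ (fun x : {i : Fin n // ¬ IsLoop M i} =>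
                if h : IsLoop N x.1 then none else some ⟨x.1, h⟩) ?_
              intro x y hxy
              by_cases hx : IsLoop N x.1 <;> by_cases hy : IsLoop N y.1 <;>
                simp [hx, hy] at hxy
              · have hxi : x.1 = i := by
                  by_contra hne; exact h2 ⟨x.1, hx, x.2, hne⟩
                have hyi : y.1 = i := by
                  by_contra hne; exact h2 ⟨y.1, hy, y.2, hne⟩
                exact Subtype.ext (hxi.trans hyi.symm)
              · exact Subtype.ext hxy
            omega
      obtain ⟨x, y, hxi, hyi, hz, hM⟩ := hwit
      obtain ⟨N', hle1, hle2, hnle1, hunch⟩ := build_clone hε hle hiN hjN hrelij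
      refine ⟨N', ⟨hle1, hnle1⟩, hle2, ?_⟩
      rintro ⟨ε', hε', hle'⟩
      rcases hle' x y with h0 | h0
      · exact hM h0
      · rw [hunch x y hxi hyi, hz, mul_zero] at h0
        exact hM h0
    · -- the class of i consists of N-loops: merge it onto an adjacent class
      have hclassLoops : ∀ j, Rel M i j → IsLoop N j := by
        intro j hj
        by_contra hjN
        exact h1 ⟨j, hjN, hj⟩
      obtain ⟨k0, hk0⟩ : ∃ k, M.χ i k ≠ 0 := by simpa [IsLoop] using hiM
      obtain ⟨b, hib, harc⟩ := exists_adjacent M hk0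
      obtain ⟨x0, y0, h0⟩ := N.nonzero
      have hx0N : ¬ IsLoop N x0 := nonloop_left h0
      have hy0N : ¬ IsLoop N y0 := nonloop_right h0
      have hM0 : M.χ x0 y0 ≠ 0 := chiM_ne_of_chiN hle h0
      have hx0A : ¬ Rel M i x0 := fun h => hx0N (hclassLoops x0 h)
      have hy0A : ¬ Rel M i y0 := fun h => hy0N (hclassLoops y0 h)
      obtain ⟨N', hleM', hab0, c1, m5, c2, k, hk⟩ := build_merge hib harc hx0A hy0A hM0
      refine ⟨N', ⟨⟨ε, hε, ?_⟩, ?_⟩, hleM', ?_⟩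
      · intro x y
        by_cases hNxy : N.χ x y = 0
        · exact Or.inl hNxy
        have hxN : ¬ IsLoop N x := nonloop_left hNxy
        have hyN : ¬ IsLoop N y := nonloop_right hNxy
        have hxA : ¬ Rel M i x := fun h => hxN (hclassLoops x h)
        have hyA : ¬ Rel M i y := fun h => hyN (hclassLoops y h)
        right
        rw [c1 x y hxA hyA]
        exact (hle x y).resolve_left hNxy
      · rintro ⟨ε', hε', hle'⟩
        rcases hle' i k with h0 | h0
        · exact hk h0
        · rw [hiN k, mul_zero] at h0; exact hk h0
      · rintro ⟨ε', hε', hle'⟩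
        rcases hle' i b with h0 | h0
        · exact hib h0
        · rw [hab0, mul_zero] at h0; exact hib h0
  · -- equal supports
    have hML : ∀ w, ¬ IsLoop M w → ¬ IsLoop N w := by
      intro w hw hwN
      exact hD ⟨w, hwN, hw⟩
    have hlM : lM M ≤ lM N := by
      refine Nat.card_le_card_of_injective
        (fun x : {i : Fin n // ¬ IsLoop M i} =>
          (⟨x.1, hML x.1 x.2⟩ : {i : Fin n // ¬ IsLoop N i})) ?_
      intro x y hxy
      exact Subtype.ext (by simpa using congrArg Subtype.val hxy)
    have hpgap : pM N + 2 ≤ pM M := by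
      have := l_mono hleNM
      omega
    have hzz : ∀ i j, M.χ i j = 0 → N.χ i j = 0 := fun i j h => chi_zero_mono hleNM h
    rcases defect_dichotomy hML (fun x hx => nonloop_mono hleNM hx) hzz hpgap with
      ⟨u1, u2, u3, h1, h2, h3, z12, z13, z23, m12, m13, m23⟩ |
      ⟨u1, u2, v1, v2, h1, h2, h3, h4, z12, m12, z34, m34, hnrel⟩
    · refine build_B hε hle hML h1 h2 z12 m12 ?_
      intro a ha
      have haN : ¬ IsLoop N a := rel_nonloop ha h1
      by_cases r1 : Rel M a u1
      · refine ⟨u2, u3, z23, m23, ?_, ?_⟩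
        · intro r2
          exact m12 (chi_zero_of_rel (rel_trans (rel_symm r1) r2))
        · intro r3
          exact m13 (chi_zero_of_rel (rel_trans (rel_symm r1) r3))
      · by_cases r2 : Rel M a u2
        · refine ⟨u1, u3, z13, m13, r1, ?_⟩
          intro r3
          exact m23 (chi_zero_of_rel (rel_trans (rel_symm r2) r3))
        · exact ⟨u1, u2, z12, m12, r1, r2⟩
    · refine build_B hε hle hML h1 h2 z12 m12 ?_
      intro a ha
      have haN : ¬ IsLoop N a := rel_nonloop ha h1
      have key : ∀ v, ¬ IsLoop N v → Rel N u1 v → False → True := fun _ _ _ _ => trivial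
      refine ⟨v1, v2, z34, m34, ?_, ?_⟩
      · intro r
        have h0 : N.χ a v1 = 0 := chi_zero_mono hleNM (chi_zero_of_rel r)
        exact hnrel (rel_trans ha (rel_of_chi_zero haN h3 h0))
      · intro r
        have h0 : N.χ a v2 = 0 := chi_zero_mono hleNM (chi_zero_of_rel r)
        have hv2 : Rel N u1 v2 := rel_trans ha (rel_of_chi_zero haN h4 h0)
        have hv12 : Rel N v1 v2 := rel_of_chi_zero h3 h4 z34
        exact hnrel (rel_trans hv2 (rel_symm hv12))

/- ============ the main theorem, reproved ============ -/

theorem macp_ranked' (n : ℕ) :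
    (∀ N M : Chirotope2 n, OMCovers N M → hRank M = hRank N + 1) ∧
    (∀ M : Chirotope2 n, (∀ N : Chirotope2 n, ¬ omLt N M) → hRank M = 0) := by
  constructor
  · rintro N M ⟨hlt, hcov⟩
    have hstrict := lt_counts hlt
    have hnogap : ¬ (lM N + pM N + 2 ≤ lM M + pM M) := by
      intro h
      obtain ⟨N', h1, h2⟩ := exists_middle hlt h
      exact hcov N' h1 h2
    have hlN := two_le_l N
    have hpN := two_le_p N
    have hlM := two_le_l M
    have hpM := two_le_p M
    unfold hRank
    omega
  · intro M hmin
    by_contra hh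
    have h5 : 5 ≤ lM M + pM M := by
      have hl := two_le_l M
      have hp := two_le_p M
      unfold hRank at hh
      omega
    by_cases hp3 : 3 ≤ pM M
    · -- three distinct classes: merge two adjacent ones
      obtain ⟨S1, S2, S3, h12, h13, h23⟩ :=
        three_distinct (α := {S : Set (Fin n) // ∃ i, ¬ IsLoop M i ∧ S = ParClass M i})
          (by rw [← pM] at *; omega)
      set w1 := S1.2.choose with hw1
      set w2 := S2.2.choose with hw2
      set w3 := S3.2.choose with hw3
      have hrel : ∀ (S T : {S : Set (Fin n) // ∃ i, ¬ IsLoop M i ∧ S = ParClass M i}),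
          S ≠ T → M.χ S.2.choose T.2.choose ≠ 0 := by
        intro S T hST h
        apply hST
        apply Subtype.ext
        rw [S.2.choose_spec.2, T.2.choose_spec.2]
        exact parClass_eq_iff.mpr
          (rel_of_chi_zero S.2.choose_spec.1 T.2.choose_spec.1 h)
      have hnr : ∀ (S T : {S : Set (Fin n) // ∃ i, ¬ IsLoop M i ∧ S = ParClass M i}),
          S ≠ T → ¬ Rel M S.2.choose T.2.choose :=
        fun S T hST h => hrel S T hST (chi_zero_of_rel h)
      obtain ⟨b, hab, harc⟩ := exists_adjacent M (hrel S1 S2 h12)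
      obtain ⟨N', hleM', hab0, -, -, -, -, -⟩ :=
        build_merge hab harc (hnr S1 S2 h12) (hnr S1 S3 h13) (hrel S2 S3 h23)
      refine hmin N' ⟨hleM', ?_⟩
      rintro ⟨ε', hε', hle'⟩
      rcases hle' w1 b with h0 | h0
      · exact hab h0
      · rw [hab0, mul_zero] at h0; exact hab h0
    · -- two classes, at least three non-loops: make one element a loop
      have hp2 : pM M = 2 := le_antisymm (by omega) (two_le_p M)
      have hl3 : 3 ≤ lM M := by omega
      have hpair : ∃ a a', a ≠ a' ∧ ¬ IsLoop M a ∧ Rel M a a' := by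
        by_contra hcon
        push_neg at hcon
        have hinj : Function.Injective
            (fun x : {i : Fin n // ¬ IsLoop M i} =>
              (⟨ParClass M x.1, x.1, x.2, rfl⟩ :
                {S : Set (Fin n) // ∃ i, ¬ IsLoop M i ∧ S = ParClass M i})) := by
          intro x y hxy
          have h1 : ParClass M x.1 = ParClass M y.1 := by
            simpa using congrArg Subtype.val hxy
          have h2 : Rel M x.1 y.1 := parClass_eq_iff.mp h1
          by_contra hne
          exact (hcon x.1 y.1 (fun h => hne (Subtype.ext h)) x.2) h2
        have := Nat.card_le_card_of_injective _ hinj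
        rw [← lM, ← pM] at this
        omega
      obtain ⟨a, a', hne, haM, hrel⟩ := hpair
      obtain ⟨Nl, hNl⟩ := build_loop hrel (Ne.symm hne) haM
      exact hmin Nl hNl

end MacPAux

/-- `MacP(2,n)` is a ranked poset with rank function `h(M) = l_M + p_M - 4`:
the rank increases by exactly one along covers, and minimal elements have rank `0`. -/
theorem macp_ranked (n : ℕ) :
    (∀ N M : Chirotope2 n, OMCovers N M → hRank M = hRank N + 1) ∧
    (∀ M : Chirotope2 n, (∀ N : Chirotope2 n, ¬ omLt N M) → hRank M = 0) :=
  MacPAux.macp_ranked' n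
end

section
/- Let N < M be rank-2 oriented matroids on [n] such that M covers N in the weak map order. Then μ^{-1}(N) is contained in the boundary of the closure of μ^{-1}(M) in Gr(2, ℝ^n), where μ: Gr(2,ℝ^n) → MacP(2,n) sends a 2-plane to the rank-2 oriented matroid it determines. -/
/-- Two full-rank `2 × n` matrices are equivalent iff they have the same row space. -/
def grSetoid (n : ℕ) : Setoid {A : Matrix (Fin 2) (Fin n) ℝ // A.rank = 2} where
  r A B := LinearMap.range (Matrix.vecMulLinear (A : Matrix (Fin 2) (Fin n) ℝ)) =
           LinearMap.range (Matrix.vecMulLinear (B : Matrix (Fin 2) (Fin n) ℝ))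
  iseqv := ⟨fun _ => rfl, Eq.symm, Eq.trans⟩

/-- The Grassmannian `Gr(2, ℝⁿ)` of 2-dimensional subspaces of `ℝⁿ`, as the quotient of the
space of full-rank `2 × n` real matrices by row equivalence, with the quotient topology. -/
abbrev Gr2 (n : ℕ) := Quotient (grSetoid n)

/-- The chirotope of a `2 × n` matrix: `χ(i,j)` is the sign of the determinant of the
`2 × 2` submatrix with columns `i, j`. -/
noncomputable def chiMat {n : ℕ} (A : Matrix (Fin 2) (Fin n) ℝ) (i j : Fin n) : SignType :=
  SignType.sign (A 0 i * A 1 j - A 0 j * A 1 i)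

/-- The fiber `μ⁻¹(M) ⊆ Gr(2, ℝⁿ)` of a rank-2 oriented matroid `M` under the map `μ`
sending a 2-plane to the oriented matroid it determines (a chirotope up to global sign). -/
noncomputable def muFiber {n : ℕ} (M : Chirotope2 n) : Set (Gr2 n) :=
  {x | ∃ A : {A : Matrix (Fin 2) (Fin n) ℝ // A.rank = 2},
        x = Quotient.mk (grSetoid n) A ∧
        ((∀ i j, chiMat (A : Matrix (Fin 2) (Fin n) ℝ) i j = M.χ i j) ∨
         (∀ i j, chiMat (A : Matrix (Fin 2) (Fin n) ℝ) i j = - M.χ i j))}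

/-!
A point of `μ⁻¹(N)` is the row space of a `2 × n` matrix `A` whose columns `v i` realize `N`; as
`N ≤ M`, every nonzero `2 × 2` minor of `A` has the sign prescribed by `M`. Up to reorientation, a
rank-2 chirotope is that of nonzero vectors in the upper half-plane listed in a preorder, the
position `ρ i` of `i` being the number of elements before it. Turning each nonzero column by a
small angle proportional to its position (backwards for columns pointing against a reference
column of least position), and replacing each zero column that is not a loop of `M` by a short
copy of the nonzero column just before it, gives realizations of `M` converging to `A`. So
`⟦A⟧ ∈ closure μ⁻¹(M)`. But `⟦A⟧ ∉ μ⁻¹(M)`: two matrices with the same row space differ by an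
invertible left factor `G`, which multiplies the chirotope by `sign (det G)`, so `M` would be
`±N`, contradicting `N < M`.
-/

open Filter Topology Matrix

lemma SignType.mul_self_of_ne_zero {s : SignType} (h : s ≠ 0) : s * s = 1 := by
  revert s; decide

lemma SignType.eq_one_or_eq_neg_one {s : SignType} (h : s ≠ 0) : s = 1 ∨ s = -1 := by
  revert s; decide

lemma SignType.coe_mul_self_of_ne_zero {s : SignType} (h : s ≠ 0) : (s : ℝ) * s = 1 := by
  cases s <;> simp_all

lemma SignType.coe_ne_zero {s : SignType} (h : s ≠ 0) : (s : ℝ) ≠ 0 :=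
  left_ne_zero_of_mul_eq_one (coe_mul_self_of_ne_zero h)

lemma SignType.sign_coe_mul (s : SignType) (x : ℝ) :
    SignType.sign ((s : ℝ) * x) = s * SignType.sign x := by
  cases s <;> simp [Left.sign_neg]

namespace Plane

def cross (u w : Fin 2 → ℝ) : ℝ := u 0 * w 1 - w 0 * u 1

def rot (u : Fin 2 → ℝ) : Fin 2 → ℝ := ![-u 1, u 0]

lemma cross_smul_left (a : ℝ) (u w : Fin 2 → ℝ) : cross (a • u) w = a * cross u w := by
  simp only [cross, Pi.smul_apply, smul_eq_mul]; ring

lemma cross_smul_right (a : ℝ) (u w : Fin 2 → ℝ) : cross u (a • w) = a * cross u w := by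
  simp only [cross, Pi.smul_apply, smul_eq_mul]; ring

lemma cross_zero_left (w : Fin 2 → ℝ) : cross 0 w = 0 := by simp [cross]

lemma cross_zero_right (u : Fin 2 → ℝ) : cross u 0 = 0 := by simp [cross]

lemma rot_smul (a : ℝ) (u : Fin 2 → ℝ) : rot (a • u) = a • rot u := by
  ext k; fin_cases k <;> simp [rot]

lemma cross_add_smul_rot (u : Fin 2 → ℝ) (a b : ℝ) :
    cross (u + a • rot u) (u + b • rot u) = (b - a) * (u ⬝ᵥ u) := by
  simp [cross, rot, dotProduct, Fin.sum_univ_two]; ring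

lemma dotProduct_self_pos {u : Fin 2 → ℝ} (hu : u ≠ 0) : 0 < u ⬝ᵥ u := by
  refine lt_of_le_of_ne ?_ (Ne.symm (mt dotProduct_self_eq_zero.mp hu))
  simp only [dotProduct, Fin.sum_univ_two]
  nlinarith [mul_self_nonneg (u 0), mul_self_nonneg (u 1)]

lemma eq_zero_of_cross_eq_zero {x a b : Fin 2 → ℝ} (hab : cross a b ≠ 0) (ha : cross x a = 0)
    (hb : cross x b = 0) : x = 0 := by
  have cramer : cross x b • a - cross x a • b = cross a b • x := by
    ext k; fin_cases k <;> simp [cross] <;> ring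
  rw [ha, hb, zero_smul, zero_smul, sub_zero, eq_comm, smul_eq_zero] at cramer
  exact cramer.resolve_left hab

lemma exists_eq_smul_of_cross_eq_zero {u w : Fin 2 → ℝ} (hu : u ≠ 0) (h : cross u w = 0) :
    ∃ c : ℝ, w = c • u := by
  have h' : u 0 * w 1 = w 0 * u 1 := sub_eq_zero.mp h
  by_cases h0 : u 0 = 0
  · have h1 : u 1 ≠ 0 := fun h1 => hu (by ext k; fin_cases k <;> simp [h0, h1])
    refine ⟨w 1 / u 1, ?_⟩
    ext k; fin_cases k
    · simp only [h0, zero_mul, zero_eq_mul, h1, or_false] at h'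
      simp [h0, h']
    · simp [h1]
  · refine ⟨w 0 / u 0, ?_⟩
    ext k; fin_cases k
    · simp [h0]
    · simp only [Fin.mk_one, Fin.isValue, Pi.smul_apply, smul_eq_mul]
      field_simp
      linarith

lemma sign_cross_smul_smul (s t : SignType) (u w : Fin 2 → ℝ) :
    SignType.sign (cross ((s : ℝ) • u) ((t : ℝ) • w)) = s * t * SignType.sign (cross u w) := by
  rw [cross_smul_left, cross_smul_right, SignType.sign_coe_mul, SignType.sign_coe_mul, mul_assoc]

end Plane

open Plane

open Classical in
/-- The rank-2 sign function of elements `L` placed in the open upper half-plane in the angular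
order given by `ρ`; the elements outside `L` are loops. -/
noncomputable def orderSign {n : ℕ} (L : Set (Fin n)) (ρ : Fin n → ℕ) (i j : Fin n) : SignType :=
  if i ∈ L ∧ j ∈ L then SignType.sign ((ρ j : ℝ) - ρ i) else 0

namespace Chirotope2

variable {n : ℕ}

/-- The clause of `Chirotope2.gp`: the sign vector `(a, -b, c)` is zero or has entries of both
signs. -/
def GPClause (a b c : SignType) : Prop :=
  (a = 0 ∧ b = 0 ∧ c = 0) ∨ ((a = 1 ∨ -b = 1 ∨ c = 1) ∧ (a = -1 ∨ -b = -1 ∨ c = -1))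

lemma GPClause.eq_of_eq_zero {a b c : SignType} (h : GPClause a b c) (hc : c = 0) : a = b := by
  subst hc; revert a b; unfold GPClause; decide

lemma GPClause.of_eq_neg_one {a b c : SignType} (h : GPClause a b c) (ha : a = -1) :
    b = -1 ∨ c = 1 := by
  subst ha; revert b c; unfold GPClause; decide

lemma GPClause.mul {a b c : SignType} (h : GPClause a b c) {u : SignType} (hu : u ≠ 0) :
    GPClause (u * a) (u * b) (u * c) := by
  revert a b c u; unfold GPClause; decide

variable (T : Chirotope2 n)

lemma χ_self (i : Fin n) : T.χ i i = 0 :=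
  SignType.self_eq_neg_iff.mp (T.alt i i)

lemma χ_eq_zero_of_isLoop_right {i j : Fin n} (hj : IsLoop T j) : T.χ i j = 0 := by
  rw [T.alt, hj i, neg_zero]

lemma not_isLoop_of_χ_ne_zero {i j : Fin n} (h : T.χ i j ≠ 0) : ¬ IsLoop T i :=
  fun hi => h (hi j)

lemma mul_eq_mul_of_χ_eq_zero {i j : Fin n} (hij : T.χ i j = 0) (k l : Fin n) :
    T.χ i k * T.χ j l = T.χ j k * T.χ i l :=
  GPClause.eq_of_eq_zero (T.gp k i j l) (by rw [hij, mul_zero])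

lemma exists_χ_eq_mul_of_χ_eq_zero {i j : Fin n} (hi : ¬ IsLoop T i) (hj : ¬ IsLoop T j)
    (hij : T.χ i j = 0) : ∃ s : SignType, s ≠ 0 ∧ ∀ k, T.χ i k = s * T.χ j k := by
  obtain ⟨l, hl⟩ : ∃ l, T.χ j l ≠ 0 := by simpa [IsLoop] using hj
  obtain ⟨m, hm⟩ : ∃ m, T.χ i m ≠ 0 := by simpa [IsLoop] using hi
  have hil : T.χ i l ≠ 0 := by
    intro h
    have := T.mul_eq_mul_of_χ_eq_zero hij m l
    rw [h, mul_zero] at this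
    exact mul_ne_zero hm hl this
  refine ⟨T.χ i l * T.χ j l, mul_ne_zero hil hl, fun k => ?_⟩
  calc T.χ i k = T.χ i k * T.χ j l * T.χ j l := by
        rw [mul_assoc, SignType.mul_self_of_ne_zero hl, mul_one]
    _ = T.χ j k * T.χ i l * T.χ j l := by rw [T.mul_eq_mul_of_χ_eq_zero hij]
    _ = T.χ i l * T.χ j l * T.χ j k := by ac_rfl

def smul (c : SignType) (hc : c ≠ 0) : Chirotope2 n where
  χ i j := c * T.χ i j
  nonzero := by
    obtain ⟨i, j, h⟩ := T.nonzero
    exact ⟨i, j, mul_ne_zero hc h⟩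
  alt i j := by rw [T.alt, mul_neg]
  gp x y0 y1 y2 := by
    have h : ∀ a b, c * a * (c * b) = a * b := fun a b => by
      rw [mul_mul_mul_comm, SignType.mul_self_of_ne_zero hc, one_mul]
    simpa only [h] using T.gp x y0 y1 y2

def reorient (σ : Fin n → SignType) (hσ : ∀ i, σ i ≠ 0) : Chirotope2 n where
  χ i j := σ i * σ j * T.χ i j
  nonzero := by
    obtain ⟨i, j, h⟩ := T.nonzero
    exact ⟨i, j, mul_ne_zero (mul_ne_zero (hσ i) (hσ j)) h⟩
  alt i j := by rw [T.alt, mul_neg, mul_comm (σ i)]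
  gp x y0 y1 y2 := by
    have hu : σ x * σ y0 * σ y1 * σ y2 ≠ 0 :=
      mul_ne_zero (mul_ne_zero (mul_ne_zero (hσ x) (hσ y0)) (hσ y1)) (hσ y2)
    have h : ∀ a b c d, σ a * σ b * T.χ a b * (σ c * σ d * T.χ c d) =
        σ b * σ a * σ c * σ d * (T.χ a b * T.χ c d) := fun a b c d => by ac_rfl
    simp only [h]
    have e1 : σ x * σ y1 * σ y0 * σ y2 = σ x * σ y0 * σ y1 * σ y2 := by ac_rfl
    have e2 : σ x * σ y2 * σ y0 * σ y1 = σ x * σ y0 * σ y1 * σ y2 := by ac_rfl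
    rw [e1, e2]
    exact GPClause.mul (T.gp x y0 y1 y2) hu

lemma isLoop_reorient_iff {σ : Fin n → SignType} (hσ : ∀ i, σ i ≠ 0) (i : Fin n) :
    IsLoop (T.reorient σ hσ) i ↔ IsLoop T i := by
  simp only [IsLoop, reorient, mul_eq_zero, hσ, false_or]

/-- No element lies on the negative side of `r`, and the elements parallel to `r` have the same
row as `r`. -/
def IsNormalAt (r : Fin n) : Prop :=
  (∀ i, T.χ r i ≠ -1) ∧ ∀ i, ¬ IsLoop T i → T.χ r i = 0 → ∀ k, T.χ i k = T.χ r k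

lemma exists_reorient_isNormalAt {r : Fin n} (hr : ¬ IsLoop T r) :
    ∃ σ : Fin n → SignType, ∃ hσ : ∀ i, σ i ≠ 0, (T.reorient σ hσ).IsNormalAt r := by
  classical
  obtain ⟨q, hq⟩ : ∃ q, T.χ r q ≠ 0 := by simpa [IsLoop] using hr
  let σ : Fin n → SignType := fun i =>
    if T.χ r i ≠ 0 then T.χ r i else if T.χ i q ≠ 0 then T.χ i q * T.χ r q else 1
  have hσ : ∀ i, σ i ≠ 0 := fun i => by
    dsimp only [σ]
    split_ifs with h1 h2
    exacts [h1, mul_ne_zero h2 hq, one_ne_zero]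
  have hσr : σ r = 1 := by simp [σ, T.χ_self, hq, SignType.mul_self_of_ne_zero hq]
  refine ⟨σ, hσ, fun i => ?_, fun i hi hri k => ?_⟩
  · simp only [reorient, hσr, one_mul]
    by_cases h : T.χ r i = 0
    · simp [h]
    · simp [σ, h, SignType.mul_self_of_ne_zero h]
  · simp only [reorient, hσr, one_mul, mul_eq_zero, hσ, false_or] at hri ⊢
    rw [isLoop_reorient_iff] at hi
    obtain ⟨s, hs, hrow⟩ := T.exists_χ_eq_mul_of_χ_eq_zero hi hr (by rw [T.alt, hri, neg_zero])
    have hσi : σ i = s := by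
      simp [σ, hri, hrow q, mul_assoc, SignType.mul_self_of_ne_zero hq, hs, hq]
    rw [hσi, hrow k, mul_mul_mul_comm, SignType.mul_self_of_ne_zero hs, one_mul]

def level (i : Fin n) : ℕ := (Finset.univ.filter fun k => T.χ k i = 1).card

namespace IsNormalAt

variable {T} {r : Fin n}

lemma χ_ne_neg_one_trans (hT : T.IsNormalAt r) {i j k : Fin n} (hi : ¬ IsLoop T i)
    (hj : ¬ IsLoop T j) (hij : T.χ i j ≠ -1) (hjk : T.χ j k ≠ -1) : T.χ i k ≠ -1 := by
  by_cases hrj : T.χ r j = 0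
  · have hri : T.χ r i = 0 := by
      have := hT.1 i
      rw [T.alt i j, hT.2 j hj hrj i] at hij
      generalize T.χ r i = s at *
      revert s; decide
    rw [hT.2 i hi hri k]
    exact hT.1 k
  · intro hik
    have hrj1 : T.χ r j = 1 := by
      have := hT.1 j
      generalize T.χ r j = s at *
      revert s; decide
    have hrk := hT.1 k
    have hri := hT.1 i
    rw [T.alt j k] at hjk
    -- in the relation for `j; r, i, k`, every term other than `χ r j * χ i k` has the wrong sign
    rcases GPClause.of_eq_neg_one (T.gp j r i k) (by rw [hrj1, hik, one_mul]) with h | h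
    · generalize T.χ i j = a at *
      generalize T.χ r k = b at *
      revert a b; decide
    · generalize T.χ k j = a at *
      generalize T.χ r i = b at *
      revert a b; decide

lemma χ_eq_one_trans (hT : T.IsNormalAt r) {i j k : Fin n} (hi : ¬ IsLoop T i) (hj : ¬ IsLoop T j)
    (hki : T.χ k i = 1) (hij : T.χ i j ≠ -1) : T.χ k j = 1 := by
  by_contra hkj
  have hjk : T.χ j k ≠ -1 := by
    rw [T.alt]
    generalize T.χ k j = s at *
    revert s; decide
  have hik := hT.χ_ne_neg_one_trans hi hj hij hjk
  rw [T.alt, hki] at hik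
  exact hik rfl

lemma level_lt_level (hT : T.IsNormalAt r) {i j : Fin n} (hi : ¬ IsLoop T i) (hj : ¬ IsLoop T j)
    (hij : T.χ i j = 1) : T.level i < T.level j := by
  refine Finset.card_lt_card ((Finset.ssubset_iff_of_subset ?_).mpr ⟨i, ?_, ?_⟩)
  · intro k
    simp only [Finset.mem_filter, Finset.mem_univ, true_and]
    exact fun hki => hT.χ_eq_one_trans hi hj hki (by rw [hij]; decide)
  · simpa using hij
  · simp [T.χ_self]

lemma level_eq_level (hT : T.IsNormalAt r) {i j : Fin n} (hi : ¬ IsLoop T i) (hj : ¬ IsLoop T j)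
    (hij : T.χ i j = 0) : T.level i = T.level j := by
  have hji : T.χ j i ≠ -1 := by rw [T.alt, hij]; decide
  unfold level
  congr 1
  ext k
  simp only [Finset.mem_filter, Finset.mem_univ, true_and]
  exact ⟨fun h => hT.χ_eq_one_trans hi hj h (by rw [hij]; decide),
    fun h => hT.χ_eq_one_trans hj hi h hji⟩

lemma sign_level_sub_level (hT : T.IsNormalAt r) {i j : Fin n} (hi : ¬ IsLoop T i)
    (hj : ¬ IsLoop T j) : SignType.sign ((T.level j : ℝ) - T.level i) = T.χ i j := by
  rcases h : T.χ i j with _ | _ | _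
  · simp [hT.level_eq_level hi hj h]
  · have : (T.level j : ℝ) < T.level i := by
      exact_mod_cast hT.level_lt_level hj hi (by rw [T.alt, h]; rfl)
    exact sign_neg (by linarith)
  · have : (T.level i : ℝ) < T.level j := by exact_mod_cast hT.level_lt_level hi hj h
    exact sign_pos (by linarith)

lemma level_eq_zero (hT : T.IsNormalAt r) : T.level r = 0 := by
  refine Finset.card_eq_zero.mpr (Finset.filter_eq_empty_iff.mpr fun k _ hkr => hT.1 k ?_)
  rw [T.alt, hkr]

end IsNormalAt

theorem exists_reorient_eq_orderSign {r : Fin n} (hr : ¬ IsLoop T r) :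
    ∃ σ : Fin n → SignType, ∃ hσ : ∀ i, σ i ≠ 0, ∃ ρ : Fin n → ℕ, ρ r = 0 ∧
      ∀ i j, (T.reorient σ hσ).χ i j = orderSign {i | ¬ IsLoop T i} ρ i j := by
  obtain ⟨σ, hσ, hT⟩ := T.exists_reorient_isNormalAt hr
  refine ⟨σ, hσ, _, hT.level_eq_zero, fun i j => ?_⟩
  simp only [orderSign, Set.mem_ofPred_eq]
  split_ifs with h
  · rw [← isLoop_reorient_iff T hσ, ← isLoop_reorient_iff T hσ] at h
    exact (hT.sign_level_sub_level h.1 h.2).symm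
  · rw [not_and_or, not_not, not_not, ← isLoop_reorient_iff T hσ,
      ← isLoop_reorient_iff T hσ] at h
    rcases h with h | h
    · exact h j
    · exact χ_eq_zero_of_isLoop_right _ h

end Chirotope2

structure WeakOrderedRealization (n : ℕ) where
  L : Set (Fin n)
  ρ : Fin n → ℕ
  v : Fin n → Fin 2 → ℝ
  r : Fin n
  sign_cross : ∀ i j, cross (v i) (v j) ≠ 0 →
    SignType.sign (cross (v i) (v j)) = orderSign L ρ i j
  spans : ∃ p q, cross (v p) (v q) ≠ 0
  v_r_ne_zero : v r ≠ 0
  ρ_r_le : ∀ i, ρ r ≤ ρ i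

namespace WeakOrderedRealization

variable {n : ℕ} (R : WeakOrderedRealization n)

lemma exists_cross_ne_zero {i : Fin n} (hi : R.v i ≠ 0) : ∃ j, cross (R.v i) (R.v j) ≠ 0 := by
  obtain ⟨p, q, hpq⟩ := R.spans
  by_contra! h
  exact hi (eq_zero_of_cross_eq_zero hpq (h p) (h q))

lemma mem_L_of_cross_ne_zero {i j : Fin n} (h : cross (R.v i) (R.v j) ≠ 0) :
    i ∈ R.L ∧ j ∈ R.L := by
  by_contra hL
  have hs := R.sign_cross i j h
  rw [orderSign, if_neg hL, sign_eq_zero_iff] at hs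
  exact h hs

lemma sign_cross_eq_sign_sub {i j : Fin n} (h : cross (R.v i) (R.v j) ≠ 0) :
    SignType.sign (cross (R.v i) (R.v j)) = SignType.sign ((R.ρ j : ℝ) - R.ρ i) := by
  rw [R.sign_cross i j h, orderSign, if_pos (R.mem_L_of_cross_ne_zero h)]

lemma mem_L {i : Fin n} (hi : R.v i ≠ 0) : i ∈ R.L :=
  (R.mem_L_of_cross_ne_zero (R.exists_cross_ne_zero hi).choose_spec).1

lemma cross_eq_zero_of_ρ_eq {i j : Fin n} (h : R.ρ i = R.ρ j) : cross (R.v i) (R.v j) = 0 := by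
  by_contra hc
  have hs := R.sign_cross_eq_sign_sub hc
  rw [h, sub_self, sign_zero] at hs
  exact hc (sign_eq_zero_iff.mp hs)

lemma cross_r_pos {i : Fin n} (h : cross (R.v R.r) (R.v i) ≠ 0) : 0 < cross (R.v R.r) (R.v i) := by
  have hlt : R.ρ R.r < R.ρ i :=
    lt_of_le_of_ne (R.ρ_r_le i) fun he => h (R.cross_eq_zero_of_ρ_eq he)
  have hs := R.sign_cross_eq_sign_sub h
  rwa [sign_pos (show (0 : ℝ) < R.ρ i - R.ρ R.r by simpa using hlt), sign_eq_one_iff] at hs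

lemma exists_anchor (i : Fin n) : ∃ a, R.v a ≠ 0 ∧ R.ρ a ≤ R.ρ i ∧
    ∀ j, R.v j ≠ 0 → R.ρ j ≤ R.ρ i → R.ρ j ≤ R.ρ a := by
  classical
  obtain ⟨a, ha, hmax⟩ := Finset.exists_max_image
    (Finset.univ.filter fun j => R.v j ≠ 0 ∧ R.ρ j ≤ R.ρ i) R.ρ
    ⟨R.r, by simp [R.v_r_ne_zero, R.ρ_r_le]⟩
  simp only [Finset.mem_filter, Finset.mem_univ, true_and] at ha hmax
  exact ⟨a, ha.1, ha.2, fun j hj hji => hmax j ⟨hj, hji⟩⟩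

open Classical in
/-- The nonzero column standing in for `v i` in the perturbation. -/
noncomputable def anchor (i : Fin n) : Fin n :=
  if R.v i ≠ 0 then i else (R.exists_anchor i).choose

lemma anchor_of_ne_zero {i : Fin n} (hi : R.v i ≠ 0) : R.anchor i = i := if_pos hi

lemma v_anchor_ne_zero (i : Fin n) : R.v (R.anchor i) ≠ 0 := by
  unfold anchor
  split_ifs with hi
  exacts [hi, (R.exists_anchor i).choose_spec.1]

lemma ρ_anchor_le (i : Fin n) : R.ρ (R.anchor i) ≤ R.ρ i := by
  unfold anchor
  split_ifs
  exacts [le_rfl, (R.exists_anchor i).choose_spec.2.1]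

lemma le_ρ_anchor (i : Fin n) {j : Fin n} (hj : R.v j ≠ 0) (hji : R.ρ j ≤ R.ρ i) :
    R.ρ j ≤ R.ρ (R.anchor i) := by
  unfold anchor
  split_ifs
  exacts [hji, (R.exists_anchor i).choose_spec.2.2 j hj hji]

lemma ρ_anchor_mono {i j : Fin n} (h : R.ρ i ≤ R.ρ j) : R.ρ (R.anchor i) ≤ R.ρ (R.anchor j) :=
  R.le_ρ_anchor j (R.v_anchor_ne_zero i) ((R.ρ_anchor_le i).trans h)

lemma sign_cross_anchor {i j : Fin n} (hi : i ∈ R.L) (hj : j ∈ R.L)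
    (h : cross (R.v (R.anchor i)) (R.v (R.anchor j)) ≠ 0) :
    SignType.sign (cross (R.v (R.anchor i)) (R.v (R.anchor j))) = orderSign R.L R.ρ i j := by
  rw [R.sign_cross_eq_sign_sub h, orderSign, if_pos ⟨hi, hj⟩]
  rcases lt_or_gt_of_ne fun he => h (R.cross_eq_zero_of_ρ_eq he) with hlt | hlt
  · have hij : R.ρ i < R.ρ j := lt_of_not_ge fun hji => (R.ρ_anchor_mono hji).not_gt hlt
    rw [sign_pos (by simpa using hlt), sign_pos (by simpa using hij)]
  · have hji : R.ρ j < R.ρ i := lt_of_not_ge fun hij => (R.ρ_anchor_mono hij).not_gt hlt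
    rw [sign_neg (by simpa using hlt), sign_neg (by simpa using hji)]

lemma cross_r_eq_zero_of_eq_smul {a b : Fin n} {c : ℝ} (hc : c < 0) (hab : R.v b = c • R.v a) :
    cross (R.v R.r) (R.v a) = 0 := by
  by_contra h
  have ha := R.cross_r_pos h
  have hb : cross (R.v R.r) (R.v b) = c * cross (R.v R.r) (R.v a) := by
    rw [hab, cross_smul_right]
  have := R.cross_r_pos (by rw [hb]; exact mul_ne_zero hc.ne ha.ne')
  nlinarith

lemma ρ_lt_of_eq_smul {a b : Fin n} {κ μ : ℝ} (hκ : κ < 0) (hμ : 0 < μ)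
    (ha : R.v a = κ • R.v R.r) (hb : R.v b = μ • R.v R.r) : R.ρ b < R.ρ a := by
  obtain ⟨k, hk⟩ := R.exists_cross_ne_zero R.v_r_ne_zero
  have hrk := R.cross_r_pos hk
  have hak : cross (R.v a) (R.v k) < 0 := by
    rw [ha, cross_smul_left]; exact mul_neg_of_neg_of_pos hκ hrk
  have hbk : 0 < cross (R.v b) (R.v k) := by
    rw [hb, cross_smul_left]; exact mul_pos hμ hrk
  have h1 := R.sign_cross_eq_sign_sub hak.ne
  have h2 := R.sign_cross_eq_sign_sub hbk.ne'
  rw [sign_neg hak, eq_comm, sign_eq_neg_one_iff] at h1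
  rw [sign_pos hbk, eq_comm, sign_eq_one_iff] at h2
  exact_mod_cast (by linarith : (R.ρ b : ℝ) < R.ρ a)

noncomputable def shift : ℝ := ∑ i, (R.ρ i : ℝ) + 1

lemma ρ_lt_shift (i : Fin n) : (R.ρ i : ℝ) < R.shift := by
  have := Finset.single_le_sum (f := fun i => (R.ρ i : ℝ)) (fun _ _ => by positivity)
    (Finset.mem_univ i)
  unfold shift
  linarith

open Classical in
/-- The rotation speed of the `i`-th vector; vectors pointing against `v r` turn backwards, so
that they stay in the half-plane of the others. -/
noncomputable def θ (i : Fin n) : ℝ :=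
  R.ρ i - if R.v (R.anchor i) ⬝ᵥ R.v R.r < 0 then R.shift else 0

lemma sign_θ_sub_of_eq_smul_of_neg {i j : Fin n} {c : ℝ} (hc : c < 0)
    (h : R.v (R.anchor j) = c • R.v (R.anchor i)) :
    SignType.sign (R.θ j - R.θ i) = - SignType.sign ((R.ρ j : ℝ) - R.ρ i) := by
  have hsi := R.ρ_lt_shift i
  have hsj := R.ρ_lt_shift j
  have hrr := dotProduct_self_pos R.v_r_ne_zero
  obtain ⟨κ, hκ⟩ := exists_eq_smul_of_cross_eq_zero R.v_r_ne_zero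
    (R.cross_r_eq_zero_of_eq_smul hc h)
  have hb : R.v (R.anchor j) = (c * κ) • R.v R.r := by rw [h, hκ, smul_smul]
  have hκ0 : κ ≠ 0 := by rintro rfl; exact R.v_anchor_ne_zero i (by rw [hκ, zero_smul])
  unfold θ
  rw [hκ, hb, smul_dotProduct, smul_dotProduct, smul_eq_mul, smul_eq_mul]
  rcases lt_or_gt_of_ne hκ0 with hκneg | hκpos
  · have hcκ := mul_pos_of_neg_of_neg hc hκneg
    have hba := R.ρ_lt_of_eq_smul hκneg hcκ hκ hb
    have hji : R.ρ j < R.ρ i := lt_of_not_ge fun hij => (R.ρ_anchor_mono hij).not_gt hba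
    have hji' : (R.ρ j : ℝ) < R.ρ i := by exact_mod_cast hji
    rw [if_pos (mul_neg_of_neg_of_pos hκneg hrr), if_neg (not_lt.mpr (mul_pos hcκ hrr).le),
      sign_pos (by linarith), sign_neg (by linarith)]
    rfl
  · have hcκ := mul_neg_of_neg_of_pos hc hκpos
    have hab := R.ρ_lt_of_eq_smul hcκ hκpos hb hκ
    have hij : R.ρ i < R.ρ j := lt_of_not_ge fun hji => (R.ρ_anchor_mono hji).not_gt hab
    have hij' : (R.ρ i : ℝ) < R.ρ j := by exact_mod_cast hij
    rw [if_neg (not_lt.mpr (mul_pos hκpos hrr).le), if_pos (mul_neg_of_neg_of_pos hcκ hrr),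
      sign_neg (by linarith), sign_pos (by linarith)]

lemma θ_sub_of_eq_smul_of_pos {i j : Fin n} {c : ℝ} (hc : 0 < c)
    (h : R.v (R.anchor j) = c • R.v (R.anchor i)) : R.θ j - R.θ i = R.ρ j - R.ρ i := by
  have hflag : R.v (R.anchor j) ⬝ᵥ R.v R.r < 0 ↔ R.v (R.anchor i) ⬝ᵥ R.v R.r < 0 := by
    rw [h, smul_dotProduct, smul_eq_mul]
    exact ⟨fun h => neg_of_mul_neg_right h hc.le, mul_neg_of_pos_of_neg hc⟩
  unfold θ
  by_cases hf : R.v (R.anchor i) ⬝ᵥ R.v R.r < 0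
  · rw [if_pos (hflag.mpr hf), if_pos hf]; ring
  · rw [if_neg (mt hflag.mp hf), if_neg hf]; ring

lemma sign_mul_sign_θ_sub {i j : Fin n} (hi : i ∈ R.L) (hj : j ∈ R.L) {c : ℝ} (hc : c ≠ 0)
    (h : R.v (R.anchor j) = c • R.v (R.anchor i)) :
    SignType.sign c * SignType.sign (R.θ j - R.θ i) = orderSign R.L R.ρ i j := by
  rw [orderSign, if_pos ⟨hi, hj⟩]
  rcases lt_or_gt_of_ne hc with hc | hc
  · rw [sign_neg hc, R.sign_θ_sub_of_eq_smul_of_neg hc h, neg_one_mul, neg_neg]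
  · rw [sign_pos hc, one_mul, R.θ_sub_of_eq_smul_of_pos hc h]

open Classical in
noncomputable def weight (i : Fin n) (t : ℝ) : ℝ :=
  if R.v i ≠ 0 then 1 else if i ∈ R.L then t else 0

noncomputable def tilt (t : ℝ) (i : Fin n) : Fin 2 → ℝ :=
  R.v (R.anchor i) + (t * R.θ i) • rot (R.v (R.anchor i))

noncomputable def path (t : ℝ) (i : Fin n) : Fin 2 → ℝ := R.weight i t • R.tilt t i

lemma continuous_weight (i : Fin n) : Continuous (R.weight i) := by
  unfold weight
  split_ifs <;> fun_prop

lemma weight_pos {i : Fin n} (hi : i ∈ R.L) {t : ℝ} (ht : 0 < t) : 0 < R.weight i t := by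
  unfold weight
  split_ifs <;> simp_all

lemma path_eq_zero {i : Fin n} (hi : i ∉ R.L) (t : ℝ) : R.path t i = 0 := by
  have hv : R.v i = 0 := by_contra fun h => hi (R.mem_L h)
  simp [path, weight, hv, hi]

lemma tendsto_path : Tendsto R.path (𝓝 0) (𝓝 R.v) := by
  have hcont : Continuous R.path := by
    refine continuous_pi fun i => ?_
    have := R.continuous_weight i
    unfold path tilt
    fun_prop
  have h0 : R.path 0 = R.v := by
    funext i
    by_cases hi : R.v i = 0
    · simp [path, weight, hi]
    · simp [path, tilt, weight, hi, R.anchor_of_ne_zero hi]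
  simpa [h0] using hcont.tendsto 0

lemma sign_cross_path {i j : Fin n} (hi : i ∈ R.L) (hj : j ∈ R.L) {t : ℝ} (ht : 0 < t) :
    SignType.sign (cross (R.path t i) (R.path t j)) =
      SignType.sign (cross (R.tilt t i) (R.tilt t j)) := by
  rw [path, path, cross_smul_left, cross_smul_right, sign_mul, sign_mul,
    sign_pos (R.weight_pos hi ht), sign_pos (R.weight_pos hj ht), one_mul, one_mul]

lemma sign_cross_tilt_of_cross_eq_zero {i j : Fin n} (hi : i ∈ R.L) (hj : j ∈ R.L)
    (hcr : cross (R.v (R.anchor i)) (R.v (R.anchor j)) = 0) {t : ℝ} (ht : 0 < t) :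
    SignType.sign (cross (R.tilt t i) (R.tilt t j)) = orderSign R.L R.ρ i j := by
  obtain ⟨c, hc⟩ := exists_eq_smul_of_cross_eq_zero (R.v_anchor_ne_zero i) hcr
  have hc0 : c ≠ 0 := by
    rintro rfl
    exact R.v_anchor_ne_zero j (by rw [hc, zero_smul])
  have htilt : R.tilt t j = c • (R.v (R.anchor i) + (t * R.θ j) • rot (R.v (R.anchor i))) := by
    rw [tilt, hc, rot_smul, smul_add, smul_comm]
  rw [htilt, tilt, cross_smul_right, cross_add_smul_rot, ← R.sign_mul_sign_θ_sub hi hj hc0 hc,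
    ← mul_sub, sign_mul, sign_mul, sign_mul, sign_pos ht,
    sign_pos (dotProduct_self_pos (R.v_anchor_ne_zero i)), one_mul, mul_one]

lemma eventually_sign_cross_tilt {i j : Fin n} (hi : i ∈ R.L) (hj : j ∈ R.L)
    (hcr : cross (R.v (R.anchor i)) (R.v (R.anchor j)) ≠ 0) :
    ∀ᶠ t in 𝓝 0, SignType.sign (cross (R.tilt t i) (R.tilt t j)) = orderSign R.L R.ρ i j := by
  have hcont : Continuous fun t => cross (R.tilt t i) (R.tilt t j) := by
    unfold tilt cross
    fun_prop
  have hlim := (continuousAt_sign_of_ne_zero hcr).tendsto.comp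
    (by simpa [tilt] using hcont.tendsto 0)
  rw [nhds_discrete SignType, tendsto_pure] at hlim
  rw [← R.sign_cross_anchor hi hj hcr]
  exact hlim

lemma eventually_sign_cross_path : ∀ᶠ t in 𝓝[>] (0 : ℝ), ∀ i j,
    SignType.sign (cross (R.path t i) (R.path t j)) = orderSign R.L R.ρ i j := by
  simp only [eventually_all]
  intro i j
  by_cases hL : i ∈ R.L ∧ j ∈ R.L
  · have hpos : ∀ᶠ t in 𝓝[>] (0 : ℝ), 0 < t := self_mem_nhdsWithin
    by_cases hcr : cross (R.v (R.anchor i)) (R.v (R.anchor j)) = 0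
    · filter_upwards [hpos] with t ht
      rw [R.sign_cross_path hL.1 hL.2 ht, R.sign_cross_tilt_of_cross_eq_zero hL.1 hL.2 hcr ht]
    · filter_upwards [hpos, nhdsWithin_le_nhds (R.eventually_sign_cross_tilt hL.1 hL.2 hcr)]
        with t ht htilt
      rw [R.sign_cross_path hL.1 hL.2 ht, htilt]
  · refine Eventually.of_forall fun t => ?_
    rw [orderSign, if_neg hL]
    rcases not_and_or.mp hL with h | h
    · rw [R.path_eq_zero h, cross_zero_left, sign_zero]
    · rw [R.path_eq_zero h, cross_zero_right, sign_zero]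

end WeakOrderedRealization

theorem Chirotope2.exists_tendsto_sign_cross {n : ℕ} (T : Chirotope2 n) (v : Fin n → Fin 2 → ℝ)
    (hv : ∀ i j, cross (v i) (v j) ≠ 0 → SignType.sign (cross (v i) (v j)) = T.χ i j)
    (hspan : ∃ p q, cross (v p) (v q) ≠ 0) :
    ∃ w : ℝ → Fin n → Fin 2 → ℝ, Tendsto w (𝓝[>] 0) (𝓝 v) ∧
      ∀ᶠ t in 𝓝[>] 0, ∀ i j, SignType.sign (cross (w t i) (w t j)) = T.χ i j := by
  obtain ⟨r, q, hrq⟩ := hspan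
  have hr : ¬ IsLoop T r :=
    T.not_isLoop_of_χ_ne_zero (j := q) (by rw [← hv r q hrq]; exact sign_ne_zero.mpr hrq)
  obtain ⟨σ, hσ, ρ, hρr, hT⟩ := T.exists_reorient_eq_orderSign hr
  have hsign : ∀ i j x, σ i * σ j * (σ i * σ j * x) = x := fun i j x => by
    rw [← mul_assoc, mul_mul_mul_comm, SignType.mul_self_of_ne_zero (hσ i),
      SignType.mul_self_of_ne_zero (hσ j), one_mul, one_mul]
  let R : WeakOrderedRealization n :=
    { L := {i | ¬ IsLoop T i}
      ρ := ρ
      v := fun i => (σ i : ℝ) • v i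
      r := r
      sign_cross := fun i j h => by
        rw [cross_smul_left, cross_smul_right] at h
        rw [sign_cross_smul_smul, hv i j (right_ne_zero_of_mul (right_ne_zero_of_mul h)), ← hT]
        rfl
      spans := ⟨r, q, by
        rw [cross_smul_left, cross_smul_right]
        exact mul_ne_zero (SignType.coe_ne_zero (hσ r))
          (mul_ne_zero (SignType.coe_ne_zero (hσ q)) hrq)⟩
      v_r_ne_zero :=
        smul_ne_zero (SignType.coe_ne_zero (hσ r)) fun h => hrq (by rw [h, cross_zero_left])
      ρ_r_le := by simp [hρr] }
  refine ⟨fun t i => (σ i : ℝ) • R.path t i, ?_, ?_⟩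
  · refine tendsto_pi_nhds.mpr fun i => ?_
    have := ((tendsto_pi_nhds.mp R.tendsto_path i).const_smul (σ i : ℝ)).mono_left
      (nhdsWithin_le_nhds (s := Set.Ioi 0))
    simpa [R, smul_smul, SignType.coe_mul_self_of_ne_zero (hσ i)] using this
  · filter_upwards [R.eventually_sign_cross_path] with t ht i j
    rw [sign_cross_smul_smul, ht, ← hT i j]
    exact hsign i j _

lemma Matrix.exists_mul_eq_of_range_vecMulLinear_le {m n R : Type*} [Fintype m] [DecidableEq m]
    [CommSemiring R] {A B : Matrix m n R}
    (h : LinearMap.range B.vecMulLinear ≤ LinearMap.range A.vecMulLinear) :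
    ∃ G : Matrix m m R, G * A = B := by
  have hrow : ∀ k, ∃ g, g ᵥ* A = B k := fun k =>
    h ⟨Pi.single k 1, by simp [Matrix.row]⟩
  choose g hg using hrow
  exact ⟨Matrix.of g, funext fun k => by rw [Matrix.mul_apply_eq_vecMul]; exact hg k⟩

section Matrices

variable {n : ℕ}

lemma chiMat_eq_sign_cross (A : Matrix (Fin 2) (Fin n) ℝ) (i j : Fin n) :
    chiMat A i j = SignType.sign (cross (Aᵀ i) (Aᵀ j)) := rfl

lemma chiMat_mul (G : Matrix (Fin 2) (Fin 2) ℝ) (A : Matrix (Fin 2) (Fin n) ℝ) (i j : Fin n) :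
    chiMat (G * A) i j = SignType.sign G.det * chiMat A i j := by
  rw [chiMat, chiMat, ← sign_mul, Matrix.det_fin_two]
  congr 1
  simp only [Matrix.mul_apply, Fin.sum_univ_two]
  ring

lemma Matrix.rank_eq_two_iff (A : Matrix (Fin 2) (Fin n) ℝ) :
    A.rank = 2 ↔ ∃ i j, chiMat A i j ≠ 0 := by
  constructor
  · intro h
    have hli : LinearIndependent ℝ A.row := by
      rw [linearIndependent_iff_card_eq_finrank_span, Fintype.card_fin, Set.finrank,
        ← Matrix.rank_eq_finrank_span_row, h]
    by_contra! hall
    obtain ⟨k, hk⟩ := Function.ne_iff.mp (hli.ne_zero 0)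
    have hdep : A 1 k • A 0 + (-A 0 k) • A 1 = 0 := by
      ext j
      have := sign_eq_zero_iff.mp (hall k j)
      simp only [Pi.add_apply, Pi.smul_apply, smul_eq_mul, Pi.zero_apply]
      linarith
    have := Fintype.linearIndependent_iff.mp hli ![A 1 k, -A 0 k]
      (by simpa [Fin.sum_univ_two, Matrix.row] using hdep) 1
    exact hk (by simpa using this)
  · rintro ⟨i, j, hij⟩
    have hsub : (A.submatrix id ![i, j]).rank = 2 := by
      rw [Matrix.rank_of_det_ne_zero
        (by simpa [Matrix.det_fin_two, sign_ne_zero, chiMat] using hij), Fintype.card_fin]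
    have := A.rank_submatrix_le id ![i, j]
    have := A.rank_le_height
    omega

def Realizes (A : Matrix (Fin 2) (Fin n) ℝ) (M : Chirotope2 n) : Prop :=
  (∀ i j, chiMat A i j = M.χ i j) ∨ (∀ i j, chiMat A i j = - M.χ i j)

lemma realizes_iff {A : Matrix (Fin 2) (Fin n) ℝ} {M : Chirotope2 n} :
    Realizes A M ↔ ∃ d : SignType, d ≠ 0 ∧ ∀ i j, chiMat A i j = d * M.χ i j := by
  constructor
  · rintro (h | h)
    · exact ⟨1, one_ne_zero, by simpa using h⟩
    · exact ⟨-1, by decide, by simpa using h⟩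
  · rintro ⟨d, hd, h⟩
    rcases SignType.eq_one_or_eq_neg_one hd with rfl | rfl
    · exact Or.inl (by simpa using h)
    · exact Or.inr (by simpa using h)

lemma Realizes.rank_eq_two {A : Matrix (Fin 2) (Fin n) ℝ} {M : Chirotope2 n} (h : Realizes A M) :
    A.rank = 2 := by
  obtain ⟨d, hd, hA⟩ := realizes_iff.mp h
  obtain ⟨i, j, hM⟩ := M.nonzero
  exact (Matrix.rank_eq_two_iff A).mpr ⟨i, j, by rw [hA]; exact mul_ne_zero hd hM⟩

theorem mem_closure_setOf_realizes {N M : Chirotope2 n} (hle : omLe N M)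
    {A : Matrix (Fin 2) (Fin n) ℝ} (hA : Realizes A N) (hrank : A.rank = 2) :
    A ∈ closure {B | Realizes B M} := by
  obtain ⟨ε, hε, hNM⟩ := hle
  obtain ⟨δ, hδ, hAN⟩ := realizes_iff.mp hA
  have hc : δ * ε ≠ 0 := mul_ne_zero hδ (by rcases hε with rfl | rfl <;> decide)
  have hv : ∀ i j, cross (Aᵀ i) (Aᵀ j) ≠ 0 →
      SignType.sign (cross (Aᵀ i) (Aᵀ j)) = (M.smul _ hc).χ i j := by
    intro i j h
    have hN : N.χ i j ≠ 0 := fun h0 => h (by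
      rw [← sign_eq_zero_iff, ← chiMat_eq_sign_cross, hAN, h0, mul_zero])
    rw [← chiMat_eq_sign_cross, hAN, (hNM i j).resolve_left hN, ← mul_assoc]
    rfl
  obtain ⟨p, q, hpq⟩ := (Matrix.rank_eq_two_iff A).mp hrank
  obtain ⟨w, hw, hsign⟩ :=
    (M.smul _ hc).exists_tendsto_sign_cross Aᵀ hv ⟨p, q, sign_ne_zero.mp hpq⟩
  refine mem_closure_of_tendsto (b := 𝓝[>] (0 : ℝ)) (f := fun t => (Matrix.of (w t))ᵀ) ?_ ?_
  · exact (continuous_id.matrix_transpose.tendsto Aᵀ).comp hw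
  · filter_upwards [hsign] with t ht
    exact realizes_iff.mpr ⟨δ * ε, hc, ht⟩

theorem omLe_of_range_vecMulLinear_eq {N M : Chirotope2 n} {A B : Matrix (Fin 2) (Fin n) ℝ}
    (hA : Realizes A N) (hB : Realizes B M)
    (hAB : LinearMap.range A.vecMulLinear = LinearMap.range B.vecMulLinear) : omLe M N := by
  obtain ⟨G, rfl⟩ := Matrix.exists_mul_eq_of_range_vecMulLinear_le hAB.ge
  obtain ⟨d, hd, hBM⟩ := realizes_iff.mp hB
  obtain ⟨δ, hδ, hAN⟩ := realizes_iff.mp hA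
  have hG : SignType.sign G.det ≠ 0 := by
    obtain ⟨i, j, hM⟩ := M.nonzero
    intro h0
    have := hBM i j
    rw [chiMat_mul, h0, zero_mul] at this
    exact mul_ne_zero hd hM this.symm
  refine ⟨d * SignType.sign G.det * δ,
    SignType.eq_one_or_eq_neg_one (mul_ne_zero (mul_ne_zero hd hG) hδ), fun i j => Or.inr ?_⟩
  calc M.χ i j = d * (d * M.χ i j) := by
        rw [← mul_assoc, SignType.mul_self_of_ne_zero hd, one_mul]
    _ = d * (SignType.sign G.det * (δ * N.χ i j)) := by rw [← hBM, chiMat_mul, hAN]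
    _ = d * SignType.sign G.det * δ * N.χ i j := by ac_rfl

lemma mk_mem_closure_muFiber {M : Chirotope2 n} {A : {A : Matrix (Fin 2) (Fin n) ℝ // A.rank = 2}}
    (hA : A.1 ∈ closure {B | Realizes B M}) : Quotient.mk (grSetoid n) A ∈ closure (muFiber M) := by
  have hfib : muFiber M = Quotient.mk (grSetoid n) '' {A | Realizes A.1 M} := by
    ext x
    constructor
    · rintro ⟨A, rfl, h⟩
      exact ⟨A, h, rfl⟩
    · rintro ⟨A, h, rfl⟩
      exact ⟨A, rfl, h⟩
  rw [hfib]
  refine image_closure_subset_closure_image continuous_quotient_mk' ⟨A, ?_, rfl⟩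
  rw [IsEmbedding.subtypeVal.closure_eq_preimage_closure_image]
  refine closure_mono (fun B hB => ?_) hA
  exact ⟨⟨B, Realizes.rank_eq_two hB⟩, hB, rfl⟩

end Matrices

/-- If `M` covers `N` in `MacP(2,n)`, then `μ⁻¹(N)` is contained in the boundary of the
closure of `μ⁻¹(M)` in `Gr(2, ℝⁿ)`. -/
theorem muFiber_subset_boundary {n : ℕ} (N M : Chirotope2 n) (h : OMCovers N M) :
    muFiber N ⊆ closure (muFiber M) \ muFiber M := by
  obtain ⟨⟨hle, hnle⟩, -⟩ := h
  rintro _ ⟨A, rfl, hA⟩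
  refine ⟨mk_mem_closure_muFiber (mem_closure_setOf_realizes hle hA A.2), ?_⟩
  rintro ⟨B, hAB, hB⟩
  exact hnle (omLe_of_range_vecMulLinear_eq hA hB (Quotient.exact hAB))
end
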